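/- arXiv:0908.1102 — 5 statements merged into one kernel-verified Lean document; each statement's English description precedes it below -/
import Mathlib

section
/- For any x, y in the open positive cone ℝ^d_+ and any d×d matrix B with nonnegative entries such that Bx and By lie in ℝ^d_+, the Hilbert projective pseudo-metric satisfies dist(Bx, By) ≤ dist(x, y); i.e., a nonnegative matrix weakly contracts the Hilbert metric. -/
open Finset

/-- The Hilbert projective (pseudo-)metric on the open positive cone `ℝ^d_+`:
`dist(x,y) = log max_{i,j} (x_i y_j)/(x_j y_i)`. -/
noncomputable def hilbertDist {d : ℕ} [NeZero d] (x y : Fin d → ℝ) : ℝ :=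
  Real.log (Finset.univ.sup' Finset.univ_nonempty
    (fun p : Fin d × Fin d => (x p.1 * y p.2) / (x p.2 * y p.1)))

/-- A matrix with nonnegative entries weakly contracts the Hilbert projective metric:
if `x, y` and `Bx, By` all lie in the open positive cone, then
`dist(Bx, By) ≤ dist(x, y)`. -/
theorem nonneg_matrix_weak_contraction_hilbert
    (d : ℕ) [NeZero d] (B : Matrix (Fin d) (Fin d) ℝ) (hB : ∀ i j, 0 ≤ B i j)
    (x y : Fin d → ℝ) (hx : ∀ i, 0 < x i) (hy : ∀ i, 0 < y i)
    (hBx : ∀ i, 0 < B.mulVec x i) (hBy : ∀ i, 0 < B.mulVec y i) :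
    hilbertDist (B.mulVec x) (B.mulVec y) ≤ hilbertDist x y := by
  classical
  set M : ℝ := Finset.univ.sup' Finset.univ_nonempty
    (fun p : Fin d × Fin d => (x p.1 * y p.2) / (x p.2 * y p.1)) with hM
  have hMge : ∀ k l : Fin d, x k * y l / (x l * y k) ≤ M := by
    intro k l
    exact Finset.le_sup' (f := fun p : Fin d × Fin d => (x p.1 * y p.2) / (x p.2 * y p.1))
      (Finset.mem_univ (k, l))
  have hMpos : 0 < M := by
    obtain ⟨i⟩ := (inferInstance : Nonempty (Fin d))
    have h := hMge i i
    rw [div_self (ne_of_gt (mul_pos (hx i) (hy i)))] at h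
    linarith
  -- key pairwise bound
  have key : ∀ i j : Fin d,
      (B.mulVec x i * B.mulVec y j) / (B.mulVec x j * B.mulVec y i) ≤ M := by
    intro i j
    rw [div_le_iff₀ (mul_pos (hBx j) (hBy i))]
    have e1 : B.mulVec x i * B.mulVec y j
        = ∑ k, ∑ l, (B i k * x k) * (B j l * y l) := by
      rw [Matrix.mulVec, Matrix.mulVec, dotProduct, dotProduct,
        Finset.sum_mul_sum]
    have e2 : B.mulVec x j * B.mulVec y i
        = ∑ k, ∑ l, (B j l * x l) * (B i k * y k) := by
      rw [Matrix.mulVec, Matrix.mulVec, dotProduct, dotProduct,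
        Finset.sum_mul_sum, Finset.sum_comm]
    rw [e1, e2, Finset.mul_sum]
    apply Finset.sum_le_sum
    intro k _
    rw [Finset.mul_sum]
    apply Finset.sum_le_sum
    intro l _
    have h : x k * y l ≤ M * (x l * y k) :=
      (div_le_iff₀ (mul_pos (hx l) (hy k))).mp (hMge k l)
    have h2 : (B i k * B j l) * (x k * y l) ≤ (B i k * B j l) * (M * (x l * y k)) :=
      mul_le_mul_of_nonneg_left h (mul_nonneg (hB i k) (hB j l))
    have e : B i k * x k * (B j l * y l) = (B i k * B j l) * (x k * y l) := by ring
    have e' : M * (B j l * x l * (B i k * y k)) = (B i k * B j l) * (M * (x l * y k)) := by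
      ring
    rw [e, e']
    exact h2
  have hsup : Finset.univ.sup' Finset.univ_nonempty
      (fun p : Fin d × Fin d =>
        (B.mulVec x p.1 * B.mulVec y p.2) / (B.mulVec x p.2 * B.mulVec y p.1)) ≤ M := by
    apply Finset.sup'_le
    intro p _
    exact key p.1 p.2
  have hpos : (0:ℝ) < Finset.univ.sup' Finset.univ_nonempty
      (fun p : Fin d × Fin d =>
        (B.mulVec x p.1 * B.mulVec y p.2) / (B.mulVec x p.2 * B.mulVec y p.1)) := by
    obtain ⟨i⟩ := (inferInstance : Nonempty (Fin d))
    have h : (B.mulVec x i * B.mulVec y i) / (B.mulVec x i * B.mulVec y i) ≤ _ :=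
      Finset.le_sup' (f := fun p : Fin d × Fin d =>
        (B.mulVec x p.1 * B.mulVec y p.2) / (B.mulVec x p.2 * B.mulVec y p.1))
        (Finset.mem_univ (i, i))
    rw [div_self (ne_of_gt (mul_pos (hBx i) (hBy i)))] at h
    linarith
  exact Real.log_le_log hpos hsup
end

section
/- Let A be a finite alphabet with 2d elements and a fixed-point-free involution i: A → A, and let π : A ∪ {*} → {1,...,2d+1} be an irreducible permutation in a Rauzy class with involution. If the left operation is defined at π, then there exists a positive length vector λ ∈ ℝ_+^{A/i} satisfying the balance condition Σ_{π(α)<π(*)} λ_{α̲} = Σ_{π(α)>π(*)} λ_{α̲} with λ_{α̲} > λ_{β̲}, where α is the leftmost and β the rightmost letter of π. Conversely, if such λ exists with λ_{α̲} > λ_{β̲}, then the left operation is defined at π. -/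
open Finset

namespace Rauzy

/-- The alphabet with `2*d` letters. -/
abbrev Letter (d : ℕ) := Fin (2*d)
/-- Positions `1, …, 2d+1` (0-indexed). -/
abbrev Pos (d : ℕ) := Fin (2*d+1)
/-- Combinatorial data: a bijection from `A ∪ {*}` (with `none = *`) to positions. -/
abbrev RPerm (d : ℕ) := Option (Letter d) ≃ Pos d

/-- A fixed-point-free involution of the alphabet. -/
structure Inv (d : ℕ) where
  i : Letter d → Letter d
  invol : ∀ a, i (i a) = a
  nofix : ∀ a, i a ≠ a

variable {d : ℕ}

/-- Admissibility: neither `i(A_l) ⊆ A_r` nor `i(A_r) ⊆ A_l`. -/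
def Admissible (I : Inv d) (π : RPerm d) : Prop :=
  ¬ (∀ a : Letter d, π (some a) < π none → π none < π (some (I.i a))) ∧
  ¬ (∀ a : Letter d, π none < π (some a) → π (some (I.i a)) < π none)

/-- A vector indexed by letters represents a vector indexed by involution classes
iff it is symmetric under the involution. -/
def Sym (I : Inv d) (v : Letter d → ℝ) : Prop := ∀ a, v (I.i a) = v a

/-- The balance condition defining the hyperplane `S_π`. -/
def Balanced (π : RPerm d) (v : Letter d → ℝ) : Prop :=
  ∑ a ∈ univ.filter (fun a => π (some a) < π none), v a
    = ∑ a ∈ univ.filter (fun a => π none < π (some a)), v a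

def Positive (v : Letter d → ℝ) : Prop := ∀ a, 0 < v a

/-- Membership in `S_π` (as a vector in `ℝ^{A/i}`, in letter coordinates). -/
def MemS (I : Inv d) (π : RPerm d) (v : Letter d → ℝ) : Prop := Sym I v ∧ Balanced π v

/-- The open cone `Θ_π` of admissible suspension data. -/
def MemTheta (I : Inv d) (π : RPerm d) (τ : Letter d → ℝ) : Prop :=
  MemS I π τ ∧
  (∀ k : Pos d, π none < k → (k : ℕ) < 2*d →
    0 < ∑ a ∈ univ.filter (fun a => π none < π (some a) ∧ π (some a) ≤ k), τ a) ∧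
  (∀ k : Pos d, 0 < (k : ℕ) → k < π none →
    ∑ a ∈ univ.filter (fun a => k ≤ π (some a) ∧ π (some a) < π none), τ a < 0)

/-- The cone `Θ'_π`: non-strict inequalities, excluding `0`. -/
def MemTheta' (I : Inv d) (π : RPerm d) (τ : Letter d → ℝ) : Prop :=
  MemS I π τ ∧ τ ≠ 0 ∧
  (∀ k : Pos d, π none < k → (k : ℕ) < 2*d →
    0 ≤ ∑ a ∈ univ.filter (fun a => π none < π (some a) ∧ π (some a) ≤ k), τ a) ∧
  (∀ k : Pos d, 0 < (k : ℕ) → k < π none →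
    ∑ a ∈ univ.filter (fun a => k ≤ π (some a) ∧ π (some a) < π none), τ a ≤ 0)

/-- The linear operator `Ω(π)` applied to a vector:
`(Ω(π)·v)_α = Σ_{π(ξ)>π(i(α))} v_ξ − Σ_{π(ξ)<π(α)} v_ξ`. -/
def omegaApply (I : Inv d) (π : RPerm d) (v : Letter d → ℝ) (a : Letter d) : ℝ :=
  (∑ x ∈ univ.filter (fun x => π (some (I.i a)) < π (some x)), v x)
  - ∑ x ∈ univ.filter (fun x => π (some x) < π (some a)), v x

/-- The left operation: the rightmost letter `β` is inserted immediately after `i(α)`,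
where `α` is the leftmost letter; both permutations are admissible. -/
def LeftOpTo (I : Inv d) (π π' : RPerm d) : Prop :=
  Admissible I π ∧ Admissible I π' ∧
  ∃ α β : Letter d, π (some α) = 0 ∧ π (some β) = Fin.last (2*d) ∧ β ≠ I.i α ∧
    (∀ x, π x ≤ π (some (I.i α)) → π' x = π x) ∧
    ((π' (some β) : ℕ) = (π (some (I.i α)) : ℕ) + 1) ∧
    (∀ x, x ≠ some β → π (some (I.i α)) < π x → (π' x : ℕ) = (π x : ℕ) + 1)

/-- The right operation: the leftmost letter `α` is inserted immediately before `i(β)`,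
where `β` is the rightmost letter; both permutations are admissible. -/
def RightOpTo (I : Inv d) (π π' : RPerm d) : Prop :=
  Admissible I π ∧ Admissible I π' ∧
  ∃ α β : Letter d, π (some α) = 0 ∧ π (some β) = Fin.last (2*d) ∧ α ≠ I.i β ∧
    (∀ x, π (some (I.i β)) ≤ π x → π' x = π x) ∧
    ((π' (some α) : ℕ) + 1 = (π (some (I.i β)) : ℕ)) ∧
    (∀ x, x ≠ some α → π x < π (some (I.i β)) → (π' x : ℕ) + 1 = (π x : ℕ))

/-- An arrow of the Rauzy diagram with involution, with its winner and loser. -/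
structure Arrow (d : ℕ) (I : Inv d) where
  src : RPerm d
  dst : RPerm d
  winner : Letter d
  loser : Letter d
  ok : (LeftOpTo I src dst ∧ src (some winner) = 0 ∧ src (some loser) = Fin.last (2*d))
     ∨ (RightOpTo I src dst ∧ src (some loser) = 0 ∧ src (some winner) = Fin.last (2*d))

/-- A list of arrows is a path if consecutive arrows match. -/
def IsPathList (I : Inv d) (l : List (Arrow d I)) : Prop :=
  l.Chain' (fun a b => a.dst = b.src)

/-- `B_γ` for an arrow `γ`: `B·e_ξ̲ = e_ξ̲` for `ξ̲ ≠ α̲` and `B·e_α̲ = e_α̲ + e_β̲`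
(winner `α`, loser `β`), acting on vectors in letter coordinates. -/
def arrowB (I : Inv d) (a : Arrow d I) (v : Letter d → ℝ) : Letter d → ℝ :=
  fun x => v x + (if x = a.loser ∨ x = I.i a.loser then v a.winner else 0)

/-- The transpose `B*_γ` for an arrow `γ`. -/
def arrowBt (I : Inv d) (a : Arrow d I) (v : Letter d → ℝ) : Letter d → ℝ :=
  fun x => v x + (if x = a.winner ∨ x = I.i a.winner then v a.loser else 0)

/-- The inverse transpose `(B*_γ)⁻¹` for an arrow `γ`. -/
def arrowBtInv (I : Inv d) (a : Arrow d I) (v : Letter d → ℝ) : Letter d → ℝ :=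
  fun x => v x - (if x = a.winner ∨ x = I.i a.winner then v a.loser else 0)

/-- `B_γ = B_{γ_n} ⋯ B_{γ_1}` for a path `γ = γ_1 … γ_n`. -/
def pathB (I : Inv d) (l : List (Arrow d I)) (v : Letter d → ℝ) : Letter d → ℝ :=
  l.foldl (fun w a => arrowB I a w) v

/-- `B*_γ = B*_{γ_1} ⋯ B*_{γ_n}`. -/
def pathBt (I : Inv d) (l : List (Arrow d I)) (v : Letter d → ℝ) : Letter d → ℝ :=
  l.foldr (fun a w => arrowBt I a w) v

/-- `(B*_γ)⁻¹ = (B*_{γ_n})⁻¹ ⋯ (B*_{γ_1})⁻¹`. -/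
def pathBtInv (I : Inv d) (l : List (Arrow d I)) (v : Letter d → ℝ) : Letter d → ℝ :=
  l.foldl (fun w a => arrowBtInv I a w) v

/-- The canonical basis vector of `ℝ^{A/i}` for the class of `y`, in letter coordinates. -/
def classBasis (I : Inv d) (y : Letter d) : Letter d → ℝ :=
  fun x => if x = y ∨ x = I.i y then 1 else 0

/-- A path is positive if all the entries of the matrix `B_γ` (over classes) are positive. -/
def PositivePath (I : Inv d) (l : List (Arrow d I)) : Prop :=
  ∀ x y : Letter d, 0 < pathB I l (classBasis I y) x

/-- A path is complete if every involution class is the winner of some arrow. -/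
def CompletePath (I : Inv d) (l : List (Arrow d I)) : Prop :=
  ∀ x : Letter d, ∃ a ∈ l, a.winner = x ∨ a.winner = I.i x

/-- A `k`-complete path is a concatenation of `k` complete paths. -/
def KComplete (I : Inv d) (k : ℕ) (l : List (Arrow d I)) : Prop :=
  ∃ ls : List (List (Arrow d I)), ls.length = k ∧ l = ls.flatten ∧ ∀ s ∈ ls, CompletePath I s

/-- Invariance of a set of permutations under the left and right operations. -/
def OpInvariant (I : Inv d) (R : Set (RPerm d)) : Prop :=
  ∀ π ∈ R, ∀ π', (LeftOpTo I π π' ∨ RightOpTo I π π') → π' ∈ R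

/-- A Rauzy class with involution: a minimal nonempty invariant set of admissible
permutations in which every involution class wins some arrow. -/
def IsRauzyClass (I : Inv d) (R : Set (RPerm d)) : Prop :=
  R.Nonempty ∧ (∀ π ∈ R, Admissible I π) ∧ OpInvariant I R ∧
  (∀ R' ⊆ R, R'.Nonempty → OpInvariant I R' → R' = R) ∧
  (∀ x : Letter d, ∃ a : Arrow d I, a.src ∈ R ∧ a.dst ∈ R ∧
    (a.winner = x ∨ a.winner = I.i x))

/-- A permutation is irreducible if it belongs to a Rauzy class with involution. -/
def Irreducible (I : Inv d) (π : RPerm d) : Prop :=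
  ∃ R, IsRauzyClass I R ∧ π ∈ R

/-- The vector `v_π = Σ_{π(x)<π(*)} e_x̲ − Σ_{π(x)>π(*)} e_x̲`, in letter coordinates. -/
def vpi (I : Inv d) (π : RPerm d) (x : Letter d) : ℝ :=
  (if π (some x) < π none then 1 else -1) + (if π (some (I.i x)) < π none then 1 else -1)

section Aux

variable {d : ℕ}

lemma inv_eq_iff (I : Inv d) {x y : Letter d} : I.i x = y ↔ x = I.i y :=
  ⟨fun h => by rw [← h, I.invol], fun h => by rw [h, I.invol]⟩

lemma inv_inj_iff (I : Inv d) {x y : Letter d} : I.i x = I.i y ↔ x = y := by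
  rw [inv_eq_iff, I.invol]

lemma ne_inv (I : Inv d) (x : Letter d) : x ≠ I.i x := (I.nofix x).symm

lemma pne (π : RPerm d) (x : Letter d) : π (some x) ≠ π none :=
  fun h => by simpa using π.injective h

lemma adm_iff (I : Inv d) (π : RPerm d) :
    Admissible I π ↔
      (∃ a, π (some a) < π none ∧ π (some (I.i a)) < π none) ∧
      (∃ a, π none < π (some a) ∧ π none < π (some (I.i a))) := by
  unfold Admissible
  constructor
  · rintro ⟨h1, h2⟩
    push_neg at h1 h2
    obtain ⟨a, ha, ha'⟩ := h1
    obtain ⟨b, hb, hb'⟩ := h2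
    exact ⟨⟨a, ha, lt_of_le_of_ne ha' (pne π _)⟩,
      ⟨b, hb, lt_of_le_of_ne hb' (Ne.symm (pne π _))⟩⟩
  · rintro ⟨⟨a, ha1, ha2⟩, ⟨b, hb1, hb2⟩⟩
    exact ⟨fun h => absurd (h a ha1) (not_lt.mpr ha2.le),
      fun h => absurd (h b hb1) (not_lt.mpr hb2.le)⟩

lemma balanced_iff (I : Inv d) (π : RPerm d) (lam : Letter d → ℝ) (hs : Sym I lam) :
    Balanced π lam ↔
      ∑ x ∈ univ.filter (fun a => π (some a) < π none ∧ π (some (I.i a)) < π none), lam x =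
      ∑ x ∈ univ.filter (fun a => ¬π (some a) < π none ∧ ¬π (some (I.i a)) < π none), lam x := by
  classical
  have hflip : univ.filter (fun a : Letter d => π none < π (some a)) =
      univ.filter (fun a => ¬π (some a) < π none) := by
    apply filter_congr; intro a _
    constructor
    · exact fun h => not_lt.mpr h.le
    · exact fun h => lt_of_le_of_ne (not_lt.mp h) (Ne.symm (pne π a))
  have hsplitL := Finset.sum_filter_add_sum_filter_not
    (univ.filter (fun a : Letter d => π (some a) < π none))
    (fun a => π (some (I.i a)) < π none) lam
  have hsplitR := Finset.sum_filter_add_sum_filter_not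
    (univ.filter (fun a : Letter d => ¬π (some a) < π none))
    (fun a => ¬π (some (I.i a)) < π none) lam
  rw [Finset.filter_filter, Finset.filter_filter] at hsplitL hsplitR
  have hcross : ∑ x ∈ univ.filter
        (fun a : Letter d => π (some a) < π none ∧ ¬π (some (I.i a)) < π none), lam x
      = ∑ x ∈ univ.filter
        (fun a : Letter d => ¬π (some a) < π none ∧ ¬¬π (some (I.i a)) < π none), lam x := by
    apply Finset.sum_nbij' (i := fun a => I.i a) (j := fun a => I.i a)
    · intro a ha
      simp only [mem_filter, mem_univ, true_and, I.invol, not_not] at ha ⊢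
      exact ⟨ha.2, ha.1⟩
    · intro a ha
      simp only [mem_filter, mem_univ, true_and, I.invol, not_not] at ha ⊢
      exact ⟨ha.2, ha.1⟩
    · intro a _; exact I.invol a
    · intro a _; exact I.invol a
    · intro a _; exact (hs a).symm
  unfold Balanced
  rw [hflip, ← hsplitL, ← hsplitR]
  constructor <;> intro h <;> linarith [hcross]

end Aux
section Aux2
variable {d : ℕ}

lemma sum_pair_exc {s : Finset (Letter d)} {γ δ : Letter d} (f : Letter d → ℝ)
    (hγ : γ ∈ s) (hδ : δ ∈ s) (hne : γ ≠ δ) (cE c : ℝ)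
    (h1 : f γ = cE) (h2 : f δ = cE) (h3 : ∀ x ∈ s, x ≠ γ → x ≠ δ → f x = c) :
    ∑ x ∈ s, f x = 2 * cE + ((s.card : ℝ) - 2) * c := by
  classical
  have hsub : ({γ, δ} : Finset (Letter d)) ⊆ s := by
    intro x hx
    rcases Finset.mem_insert.mp hx with rfl | hx
    · exact hγ
    · rcases Finset.mem_singleton.mp hx with rfl; exact hδ
  have h2le : 2 ≤ s.card := by
    calc 2 = ({γ, δ} : Finset (Letter d)).card := (Finset.card_pair hne).symm
    _ ≤ s.card := Finset.card_le_card hsub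
  rw [← Finset.sum_sdiff hsub]
  have hpair : ∑ x ∈ ({γ, δ} : Finset (Letter d)), f x = cE + cE := by
    rw [Finset.sum_pair hne, h1, h2]
  have hrest : ∑ x ∈ s \ {γ, δ}, f x = ((s.card : ℝ) - 2) * c := by
    rw [Finset.sum_congr rfl (fun x hx => by
      have hxs := Finset.mem_sdiff.mp hx
      have : x ≠ γ ∧ x ≠ δ := by
        constructor <;> intro h <;> exact hxs.2 (by simp [h])
      exact h3 x hxs.1 this.1 this.2)]
    rw [Finset.sum_const, nsmul_eq_mul, Finset.card_sdiff_of_subset hsub, Finset.card_pair hne]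
    rw [Nat.cast_sub h2le]
    norm_num
  rw [hpair, hrest]; ring

def sFun (d pv n : ℕ) : ℕ := if n ≤ pv then n else if n = 2*d then pv+1 else n+1
def sInv (d pv n : ℕ) : ℕ := if n ≤ pv then n else if n = pv+1 then 2*d else n-1

def shiftPerm {d : ℕ} (p : Pos d) (hp : (p : ℕ) < 2*d) : Equiv.Perm (Pos d) where
  toFun k := ⟨sFun d p k, by have h1 := k.isLt; unfold sFun; split_ifs <;> omega⟩
  invFun k := ⟨sInv d p k, by have h1 := k.isLt; unfold sInv; split_ifs <;> omega⟩
  left_inv k := by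
    have h1 := k.isLt
    apply Fin.ext
    show sInv d p (sFun d p k) = (k : ℕ)
    unfold sFun sInv; split_ifs <;> omega
  right_inv k := by
    have h1 := k.isLt
    apply Fin.ext
    show sFun d p (sInv d p k) = (k : ℕ)
    unfold sFun sInv; split_ifs <;> omega

lemma shiftPerm_val {d : ℕ} (p : Pos d) (hp : (p : ℕ) < 2*d) (k : Pos d) :
    ((shiftPerm p hp) k : ℕ) = sFun d p k := rfl

end Aux2
section Conv
variable {d : ℕ}

lemma converse_dir (I : Inv d) (π : RPerm d) (hadm : Admissible I π)
    (α β : Letter d) (hα : π (some α) = 0) (hβ : π (some β) = Fin.last (2*d))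
    (lam : Letter d → ℝ) (hsym : Sym I lam) (hpos : Positive lam)
    (hbal : Balanced π lam) (hlt : lam β < lam α) :
    ∃ π', LeftOpTo I π π' := by
  classical
  have hβne : β ≠ I.i α := by
    intro h
    rw [h, hsym α] at hlt
    exact lt_irrefl _ hlt
  set p := π (some (I.i α)) with hp
  have hplast : p ≠ Fin.last (2*d) := by
    intro h
    have := π.injective (h.trans hβ.symm)
    exact hβne (by simpa using this.symm)
  have hplt : (p : ℕ) < 2*d := by
    have h1 := p.isLt
    have h2 : (p : ℕ) ≠ 2*d := fun h => hplast (Fin.ext (by simp [h]))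
    omega
  set σ := shiftPerm p hplt with hσ
  have keyval : ∀ y : Option (Letter d), ((π.trans σ) y : ℕ) = sFun d p (π y) := fun _ => rfl
  have hn0 : π none ≠ 0 := fun h => by simpa using π.injective (h.trans hα.symm)
  have hnlast : π none ≠ Fin.last (2*d) := fun h => by
    simpa using π.injective (h.trans hβ.symm)
  have huval : (π none : ℕ) ≠ 2*d := fun h => hnlast (Fin.ext (by simp [h]))
  have hun := (π none).isLt
  have hLα : π (some α) < π none := by
    rw [hα]
    exact Fin.pos_of_ne_zero hn0
  have h1 : ∀ x, π x ≤ p → (π.trans σ) x = π x := by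
    intro x hx
    apply Fin.ext
    rw [keyval]
    unfold sFun
    rw [if_pos (by exact_mod_cast hx)]
  have h2 : ((π.trans σ) (some β) : ℕ) = (p : ℕ) + 1 := by
    rw [keyval, hβ]
    unfold sFun
    simp only [Fin.val_last]
    split_ifs <;> omega
  have h3 : ∀ x, x ≠ some β → p < π x → ((π.trans σ) x : ℕ) = (π x : ℕ) + 1 := by
    intro x hx hpx
    have hxl : (π x : ℕ) ≠ 2*d := by
      intro h
      exact hx (π.injective (Fin.ext (by simp [h, hβ]) : π x = π (some β)))
    have := (π x).isLt
    have hpx' : (p : ℕ) < (π x : ℕ) := hpx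
    rw [keyval]
    unfold sFun
    split_ifs <;> omega
  obtain ⟨⟨a0, ha01, ha02⟩, ⟨b0, hb01, hb02⟩⟩ := (adm_iff I π).mp hadm
  have hadm' : Admissible I (π.trans σ) := by
    rw [adm_iff]
    rcases lt_trichotomy (π none) p with hup | hup | hup
    · -- * left of i α : sides unchanged
      have hup' : (π none : ℕ) < (p : ℕ) := hup
      have key1 : ∀ x : Letter d,
          (π.trans σ) (some x) < (π.trans σ) none ↔ π (some x) < π none := by
        intro x
        rw [Fin.lt_def, Fin.lt_def, keyval, keyval]
        have hx := (π (some x)).isLt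
        unfold sFun
        split_ifs <;> omega
      have key2 : ∀ x : Letter d,
          (π.trans σ) none < (π.trans σ) (some x) ↔ π none < π (some x) := by
        intro x
        rw [Fin.lt_def, Fin.lt_def, keyval, keyval]
        have hx := (π (some x)).isLt
        unfold sFun
        split_ifs <;> omega
      exact ⟨⟨a0, (key1 a0).mpr ha01, (key1 _).mpr ha02⟩,
        ⟨b0, (key2 b0).mpr hb01, (key2 _).mpr hb02⟩⟩
    · exact absurd hup.symm (pne π _)
    · -- i α is left of *
      have hup' : (p : ℕ) < (π none : ℕ) := hup
      have hπ'none : ((π.trans σ) none : ℕ) = (π none : ℕ) + 1 :=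
        h3 none (by simp) hup
      have dir1 : ∀ x : Letter d, π (some x) < π none →
          (π.trans σ) (some x) < (π.trans σ) none := by
        intro x hx
        rw [Fin.lt_def, hπ'none, keyval]
        have hx' : (π (some x) : ℕ) < (π none : ℕ) := hx
        unfold sFun
        split_ifs <;> omega
      have hclaim : ∃ a, π none < π (some a) ∧ π none < π (some (I.i a)) ∧
          a ≠ β ∧ I.i a ≠ β := by
        by_contra hcon
        push_neg at hcon
        have hsub : univ.filter (fun a : Letter d =>
            ¬π (some a) < π none ∧ ¬π (some (I.i a)) < π none) ⊆ {β, I.i β} := by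
          intro x hx
          simp only [mem_filter, mem_univ, true_and] at hx
          have hx1 : π none < π (some x) :=
            lt_of_le_of_ne (not_lt.mp hx.1) (Ne.symm (pne π x))
          have hx2 : π none < π (some (I.i x)) :=
            lt_of_le_of_ne (not_lt.mp hx.2) (Ne.symm (pne π _))
          by_cases hxb : x = β
          · simp [hxb]
          · have hib := hcon x hx1 hx2 hxb
            have : x = I.i β := (inv_eq_iff I).mp hib
            simp [this]
        have hsubL : ({α, I.i α} : Finset (Letter d)) ⊆ univ.filter
            (fun a : Letter d => π (some a) < π none ∧ π (some (I.i a)) < π none) := by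
          intro x hx
          simp only [Finset.mem_insert, Finset.mem_singleton] at hx
          rcases hx with rfl | rfl
          · simp only [mem_filter, mem_univ, true_and]
            exact ⟨hLα, hup⟩
          · simp only [mem_filter, mem_univ, true_and, I.invol]
            exact ⟨hup, hLα⟩
        rw [balanced_iff I π lam hsym] at hbal
        have hge : lam α + lam (I.i α) ≤ ∑ x ∈ univ.filter
            (fun a : Letter d => π (some a) < π none ∧ π (some (I.i a)) < π none), lam x := by
          rw [← Finset.sum_pair (ne_inv I α)]
          exact Finset.sum_le_sum_of_subset_of_nonneg hsubL (fun i _ _ => (hpos i).le)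
        have hle : ∑ x ∈ univ.filter (fun a : Letter d =>
            ¬π (some a) < π none ∧ ¬π (some (I.i a)) < π none), lam x
            ≤ lam β + lam (I.i β) := by
          rw [← Finset.sum_pair (ne_inv I β)]
          exact Finset.sum_le_sum_of_subset_of_nonneg hsub (fun i _ _ => (hpos i).le)
        have e1 := hsym α
        have e2 := hsym β
        linarith
      obtain ⟨a, ha1, ha2, ha3, ha4⟩ := hclaim
      have dir2 : ∀ x : Letter d, x ≠ β → π none < π (some x) →
          (π.trans σ) none < (π.trans σ) (some x) := by
        intro x hx hux
        rw [Fin.lt_def, hπ'none, keyval]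
        have hux' : (π none : ℕ) < (π (some x) : ℕ) := hux
        have hxl : (π (some x) : ℕ) ≠ 2*d := by
          intro h
          exact hx (by simpa using π.injective (Fin.ext (by simp [h, hβ]) : π (some x) = π (some β)))
        have := (π (some x)).isLt
        unfold sFun
        split_ifs <;> omega
      exact ⟨⟨a0, dir1 a0 ha01, dir1 _ ha02⟩, ⟨a, dir2 a ha3 ha1, dir2 _ ha4 ha2⟩⟩
  exact ⟨π.trans σ, hadm, hadm', α, β, hα, hβ, hβne, h1, h2, h3⟩

end Conv
section Fwd
variable {d : ℕ}

lemma card_FL_two (I : Inv d) (π : RPerm d)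
    (a0 : Letter d) (h1 : π (some a0) < π none) (h2 : π (some (I.i a0)) < π none) :
    2 ≤ (univ.filter (fun a : Letter d =>
      π (some a) < π none ∧ π (some (I.i a)) < π none)).card := by
  classical
  have hsub : ({a0, I.i a0} : Finset (Letter d)) ⊆ univ.filter (fun a : Letter d =>
      π (some a) < π none ∧ π (some (I.i a)) < π none) := by
    intro x hx
    simp only [Finset.mem_insert, Finset.mem_singleton] at hx
    rcases hx with rfl | rfl
    · simp only [mem_filter, mem_univ, true_and]; exact ⟨h1, h2⟩
    · simp only [mem_filter, mem_univ, true_and, I.invol]; exact ⟨h2, h1⟩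
  calc 2 = ({a0, I.i a0} : Finset (Letter d)).card := (Finset.card_pair (ne_inv I a0)).symm
  _ ≤ _ := Finset.card_le_card hsub

lemma card_FR_two (I : Inv d) (π : RPerm d)
    (b0 : Letter d) (h1 : π none < π (some b0)) (h2 : π none < π (some (I.i b0))) :
    2 ≤ (univ.filter (fun a : Letter d =>
      ¬π (some a) < π none ∧ ¬π (some (I.i a)) < π none)).card := by
  classical
  have hsub : ({b0, I.i b0} : Finset (Letter d)) ⊆ univ.filter (fun a : Letter d =>
      ¬π (some a) < π none ∧ ¬π (some (I.i a)) < π none) := by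
    intro x hx
    simp only [Finset.mem_insert, Finset.mem_singleton] at hx
    rcases hx with rfl | rfl
    · simp only [mem_filter, mem_univ, true_and]; exact ⟨not_lt.mpr h1.le, not_lt.mpr h2.le⟩
    · simp only [mem_filter, mem_univ, true_and, I.invol]
      exact ⟨not_lt.mpr h2.le, not_lt.mpr h1.le⟩
  calc 2 = ({b0, I.i b0} : Finset (Letter d)).card := (Finset.card_pair (ne_inv I b0)).symm
  _ ≤ _ := Finset.card_le_card hsub

/-- Case: `i α` is on the left and `i β` on the left (both classes: α full-left, β mixed). -/
lemma construct_iii (I : Inv d) (π : RPerm d) (hadm : Admissible I π)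
    (α β : Letter d) (hLα : π (some α) < π none) (hRβ : π none < π (some β))
    (hiα : π (some (I.i α)) < π none) (hiβ : π (some (I.i β)) < π none) :
    ∃ lam : Letter d → ℝ,
      Sym I lam ∧ Positive lam ∧ Balanced π lam ∧ lam β < lam α := by
  classical
  obtain ⟨⟨a0, ha01, ha02⟩, ⟨b0, hb01, hb02⟩⟩ := (adm_iff I π).mp hadm
  set NL : ℝ := ((univ.filter (fun a : Letter d =>
      π (some a) < π none ∧ π (some (I.i a)) < π none)).card : ℝ) with hNL
  set NR : ℝ := ((univ.filter (fun a : Letter d =>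
      ¬π (some a) < π none ∧ ¬π (some (I.i a)) < π none)).card : ℝ) with hNR
  have hNL2 : (2:ℝ) ≤ NL := by rw [hNL]; exact_mod_cast card_FL_two I π a0 ha01 ha02
  have hNR2 : (2:ℝ) ≤ NR := by rw [hNR]; exact_mod_cast card_FR_two I π b0 hb01 hb02
  set lam : Letter d → ℝ := fun x =>
    if π (some x) < π none ∧ π (some (I.i x)) < π none then NR
    else if ¬π (some x) < π none ∧ ¬π (some (I.i x)) < π none then NL
    else NR/2 with hlam
  have hsym : Sym I lam := by
    intro x
    by_cases k1 : π (some x) < π none <;> by_cases k2 : π (some (I.i x)) < π none <;>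
      simp [hlam, I.invol, k1, k2, and_comm]
  have hpos : Positive lam := by
    intro x
    simp only [hlam]
    split_ifs <;> linarith
  have hbal : Balanced π lam := by
    rw [balanced_iff I π lam hsym]
    have hL : ∀ x ∈ univ.filter (fun a : Letter d =>
        π (some a) < π none ∧ π (some (I.i a)) < π none), lam x = NR := by
      intro x hx
      simp only [mem_filter, mem_univ, true_and] at hx
      simp only [hlam]
      rw [if_pos hx]
    have hR : ∀ x ∈ univ.filter (fun a : Letter d =>
        ¬π (some a) < π none ∧ ¬π (some (I.i a)) < π none), lam x = NL := by
      intro x hx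
      simp only [mem_filter, mem_univ, true_and] at hx
      simp only [hlam]
      rw [if_neg (fun hc => hx.1 hc.1), if_pos hx]
    rw [Finset.sum_congr rfl hL, Finset.sum_congr rfl hR, Finset.sum_const,
      Finset.sum_const, nsmul_eq_mul, nsmul_eq_mul, ← hNL, ← hNR]
    ring
  refine ⟨lam, hsym, hpos, hbal, ?_⟩
  have hlβ : lam β = NR/2 := by
    simp only [hlam]
    rw [if_neg (fun hc => absurd hc.1 (not_lt.mpr hRβ.le)), if_neg (fun hc => hc.2 hiβ)]
  have hlα : lam α = NR := by
    simp only [hlam]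
    rw [if_pos ⟨hLα, hiα⟩]
  rw [hlβ, hlα]
  linarith

end Fwd
section SymTpl
variable {d : ℕ}

lemma sym_ifs (I : Inv d) (π : RPerm d) (γ : Letter d) (c0 c1 c2 c3 : ℝ) :
    Sym I (fun x => if x = γ ∨ x = I.i γ then c0
      else if π (some x) < π none ∧ π (some (I.i x)) < π none then c1
      else if ¬π (some x) < π none ∧ ¬π (some (I.i x)) < π none then c2 else c3) := by
  intro x
  have e0 : (I.i x = γ ∨ I.i x = I.i γ) ↔ (x = γ ∨ x = I.i γ) := by
    rw [inv_eq_iff, inv_inj_iff]; exact or_comm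
  have e1 : (π (some (I.i x)) < π none ∧ π (some (I.i (I.i x))) < π none) ↔
      (π (some x) < π none ∧ π (some (I.i x)) < π none) := by
    rw [I.invol]; exact and_comm
  have e2 : (¬π (some (I.i x)) < π none ∧ ¬π (some (I.i (I.i x))) < π none) ↔
      (¬π (some x) < π none ∧ ¬π (some (I.i x)) < π none) := by
    rw [I.invol]; exact and_comm
  simp only [e0, e1, e2]

end SymTpl
section Fwd2
variable {d : ℕ}

/-- Case: `i α` is on the right (class of α mixed). -/
lemma construct_mixed (I : Inv d) (π : RPerm d) (hadm : Admissible I π)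
    (α β : Letter d) (hLα : π (some α) < π none) (hRβ : π none < π (some β))
    (hiα : ¬π (some (I.i α)) < π none) (hβα : β ≠ α) (hβiα : β ≠ I.i α) :
    ∃ lam : Letter d → ℝ,
      Sym I lam ∧ Positive lam ∧ Balanced π lam ∧ lam β < lam α := by
  classical
  obtain ⟨⟨a0, ha01, ha02⟩, ⟨b0, hb01, hb02⟩⟩ := (adm_iff I π).mp hadm
  set NL : ℝ := ((univ.filter (fun a : Letter d =>
      π (some a) < π none ∧ π (some (I.i a)) < π none)).card : ℝ) with hNL
  set NR : ℝ := ((univ.filter (fun a : Letter d =>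
      ¬π (some a) < π none ∧ ¬π (some (I.i a)) < π none)).card : ℝ) with hNR
  have hNL2 : (2:ℝ) ≤ NL := by rw [hNL]; exact_mod_cast card_FL_two I π a0 ha01 ha02
  have hNR2 : (2:ℝ) ≤ NR := by rw [hNR]; exact_mod_cast card_FR_two I π b0 hb01 hb02
  set lam : Letter d → ℝ := fun x =>
    if x = α ∨ x = I.i α then NL + 1
    else if π (some x) < π none ∧ π (some (I.i x)) < π none then NR
    else if ¬π (some x) < π none ∧ ¬π (some (I.i x)) < π none then NL
    else 1 with hlam
  have hsym : Sym I lam := hlam ▸ sym_ifs I π α (NL + 1) NR NL 1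
  have hpos : Positive lam := by
    intro x
    simp only [hlam]
    split_ifs <;> linarith
  have hbal : Balanced π lam := by
    rw [balanced_iff I π lam hsym]
    have hL : ∀ x ∈ univ.filter (fun a : Letter d =>
        π (some a) < π none ∧ π (some (I.i a)) < π none), lam x = NR := by
      intro x hx
      simp only [mem_filter, mem_univ, true_and] at hx
      simp only [hlam]
      rw [if_neg ?_, if_pos hx]
      rintro (rfl | rfl)
      · exact hiα hx.2
      · exact hiα hx.1
    have hR : ∀ x ∈ univ.filter (fun a : Letter d =>
        ¬π (some a) < π none ∧ ¬π (some (I.i a)) < π none), lam x = NL := by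
      intro x hx
      simp only [mem_filter, mem_univ, true_and] at hx
      simp only [hlam]
      rw [if_neg ?_, if_neg (fun hc => hx.1 hc.1), if_pos hx]
      rintro (rfl | rfl)
      · exact hx.1 hLα
      · rw [I.invol] at hx
        exact hx.2 hLα
    rw [Finset.sum_congr rfl hL, Finset.sum_congr rfl hR, Finset.sum_const,
      Finset.sum_const, nsmul_eq_mul, nsmul_eq_mul, ← hNL, ← hNR]
    ring
  refine ⟨lam, hsym, hpos, hbal, ?_⟩
  have hlα : lam α = NL + 1 := by
    simp [hlam]
  have hlβ : lam β ≤ NL := by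
    simp only [hlam]
    rw [if_neg (by rintro (h | h); exacts [hβα h, hβiα h]),
      if_neg (fun hc => absurd hc.1 (not_lt.mpr hRβ.le))]
    split_ifs <;> linarith
  rw [hlα]
  linarith

/-- Case: both `i α` and `β`'s class are full (α full-left, β full-right);
needs at least two full-right classes. -/
lemma construct_iv (I : Inv d) (π : RPerm d) (hadm : Admissible I π)
    (α β : Letter d) (hLα : π (some α) < π none) (hRβ : π none < π (some β))
    (hiα : π (some (I.i α)) < π none) (hiβ : ¬π (some (I.i β)) < π none)
    (hFR4 : 4 ≤ (univ.filter (fun a : Letter d =>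
      ¬π (some a) < π none ∧ ¬π (some (I.i a)) < π none)).card) :
    ∃ lam : Letter d → ℝ,
      Sym I lam ∧ Positive lam ∧ Balanced π lam ∧ lam β < lam α := by
  classical
  obtain ⟨⟨a0, ha01, ha02⟩, _⟩ := (adm_iff I π).mp hadm
  set NL : ℝ := ((univ.filter (fun a : Letter d =>
      π (some a) < π none ∧ π (some (I.i a)) < π none)).card : ℝ) with hNL
  set NR : ℝ := ((univ.filter (fun a : Letter d =>
      ¬π (some a) < π none ∧ ¬π (some (I.i a)) < π none)).card : ℝ) with hNR
  have hNL2 : (2:ℝ) ≤ NL := by rw [hNL]; exact_mod_cast card_FL_two I π a0 ha01 ha02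
  have hNR4 : (4:ℝ) ≤ NR := by rw [hNR]; exact_mod_cast hFR4
  have hNL0 : (0:ℝ) < NL := by linarith
  set t : ℝ := (1 - 1/NL)/(NR - 2) with ht
  have htpos : 0 < t := by
    rw [ht]
    apply div_pos
    · have : 1/NL < 1 := by rw [div_lt_one hNL0]; linarith
      linarith
    · linarith
  set lam : Letter d → ℝ := fun x =>
    if x = β ∨ x = I.i β then 1/(2*NL)
    else if π (some x) < π none ∧ π (some (I.i x)) < π none then 1/NL
    else if ¬π (some x) < π none ∧ ¬π (some (I.i x)) < π none then t
    else 1 with hlam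
  have hsym : Sym I lam := hlam ▸ sym_ifs I π β (1/(2*NL)) (1/NL) t 1
  have hpos : Positive lam := by
    have h1 : (0:ℝ) < 1/(2*NL) := one_div_pos.mpr (by linarith)
    have h2 : (0:ℝ) < 1/NL := one_div_pos.mpr hNL0
    intro x
    simp only [hlam]
    split_ifs <;> first | exact h1 | exact h2 | exact htpos | exact one_pos
  have hbal : Balanced π lam := by
    rw [balanced_iff I π lam hsym]
    have hL : ∀ x ∈ univ.filter (fun a : Letter d =>
        π (some a) < π none ∧ π (some (I.i a)) < π none), lam x = 1/NL := by
      intro x hx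
      simp only [mem_filter, mem_univ, true_and] at hx
      simp only [hlam]
      rw [if_neg ?_, if_pos hx]
      rintro (rfl | rfl)
      · exact absurd hx.1 (not_lt.mpr hRβ.le)
      · exact hiβ hx.1
    have hRsum : ∑ x ∈ univ.filter (fun a : Letter d =>
        ¬π (some a) < π none ∧ ¬π (some (I.i a)) < π none), lam x
        = 2 * (1/(2*NL)) + (NR - 2) * t := by
      rw [hNR]
      apply sum_pair_exc lam ?_ ?_ (ne_inv I β)
      · simp [hlam]
      · simp [hlam]
      · intro x hx hxβ hxiβ
        simp only [mem_filter, mem_univ, true_and] at hx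
        simp only [hlam]
        rw [if_neg (by rintro (h | h); exacts [hxβ h, hxiβ h]),
          if_neg (fun hc => hx.1 hc.1), if_pos hx]
      · simp only [mem_filter, mem_univ, true_and]
        exact ⟨not_lt.mpr hRβ.le, hiβ⟩
      · simp only [mem_filter, mem_univ, true_and, I.invol]
        exact ⟨hiβ, not_lt.mpr hRβ.le⟩
    rw [Finset.sum_congr rfl hL, Finset.sum_const, nsmul_eq_mul, ← hNL, hRsum, ht]
    have h2ne : NR - 2 ≠ 0 := by linarith
    have hNLne : NL ≠ 0 := by linarith
    have e1 : NL * (1/NL) = 1 := mul_one_div_cancel hNLne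
    have e2 : (2:ℝ) * (1/(2*NL)) = 1/NL := by
      rw [one_div, one_div, mul_inv]
      ring
    have e3 : (NR - 2) * ((1 - 1/NL)/(NR - 2)) = 1 - 1/NL := by
      rw [mul_comm, div_mul_cancel₀ _ h2ne]
    rw [e1, e2, e3]
    ring
  refine ⟨lam, hsym, hpos, hbal, ?_⟩
  have hlβ : lam β = 1/(2*NL) := by
    simp [hlam]
  have hlα : lam α = 1/NL := by
    simp only [hlam]
    rw [if_neg ?_, if_pos ⟨hLα, hiα⟩]
    rintro (rfl | rfl)
    · exact absurd hLα (not_lt.mpr hRβ.le)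
    · exact hiβ hLα
  rw [hlβ, hlα]
  rw [div_lt_div_iff₀ (by linarith) hNL0]
  linarith
end Fwd2
/-- For an irreducible permutation `π`, the left operation is defined at `π` if and only if
there is a positive symmetric length vector `λ` satisfying the balance condition with
`λ_α̲ > λ_β̲`, where `α` is the leftmost and `β` the rightmost letter of `π`. -/
theorem leftOp_defined_iff_exists_length_data
    {d : ℕ} (hd : 2 ≤ d) (I : Inv d) (π : RPerm d) (hirr : Irreducible I π)
    (α β : Letter d) (hα : π (some α) = 0) (hβ : π (some β) = Fin.last (2*d)) :
    (∃ π', LeftOpTo I π π') ↔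
      ∃ lam : Letter d → ℝ,
        Sym I lam ∧ Positive lam ∧ Balanced π lam ∧ lam β < lam α := by
  classical
  obtain ⟨R, hR, hπR⟩ := hirr
  have hadm : Admissible I π := hR.2.1 π hπR
  have hn0 : π none ≠ 0 := fun h => by simpa using π.injective (h.trans hα.symm)
  have hnlast : π none ≠ Fin.last (2*d) := fun h => by
    simpa using π.injective (h.trans hβ.symm)
  have hLα : π (some α) < π none := by
    rw [hα]; exact Fin.pos_of_ne_zero hn0
  have hRβ : π none < π (some β) := by
    rw [hβ]; exact lt_of_le_of_ne (Fin.le_last _) hnlast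
  have hβα : β ≠ α := by
    intro h
    rw [h, hα] at hβ
    have := congrArg Fin.val hβ
    simp [Fin.val_last] at this
    omega
  constructor
  · rintro ⟨π', hadmπ, hadm', α', β', hα', hβ', hne, hfix, hins, hshift⟩
    have hαe : α' = α := by simpa using π.injective (hα'.trans hα.symm)
    have hβe : β' = β := by simpa using π.injective (hβ'.trans hβ.symm)
    rw [hαe, hβe] at hne
    rw [hαe] at hfix
    rw [hαe, hβe] at hins
    rw [hαe, hβe] at hshift
    by_cases hiα : π (some (I.i α)) < π none
    · by_cases hiβ : π (some (I.i β)) < π none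
      · exact construct_iii I π hadm α β hLα hRβ hiα hiβ
      · -- derive that there are at least two full-right classes from admissibility of π'
        have hiαv : (π (some (I.i α)) : ℕ) < (π none : ℕ) := hiα
        have hπ'none : (π' none : ℕ) = (π none : ℕ) + 1 := hshift none (by simp) hiα
        have hβleft : (π' (some β) : ℕ) < (π' none : ℕ) := by
          rw [hπ'none, hins]; omega
        have hkey : ∀ x : Letter d, π' none < π' (some x) →
            x ≠ β ∧ π none < π (some x) := by
          intro x hx
          have hxβ : x ≠ β := by
            rintro rfl
            rw [Fin.lt_def] at hx
            omega
          refine ⟨hxβ, ?_⟩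
          by_cases hc : π (some x) ≤ π (some (I.i α))
          · exfalso
            have hfx := hfix (some x) hc
            rw [Fin.lt_def, hπ'none, hfx] at hx
            have h1 : (π (some x) : ℕ) ≤ (π (some (I.i α)) : ℕ) := hc
            omega
          · have hsx := hshift (some x) (by simp [hxβ]) (not_le.mp hc)
            rw [Fin.lt_def, hπ'none, hsx] at hx
            rw [Fin.lt_def]; omega
        obtain ⟨_, ⟨c0, hc01, hc02⟩⟩ := (adm_iff I π').mp hadm'
        obtain ⟨hc0β, hc0R⟩ := hkey c0 hc01
        obtain ⟨hic0β, hic0R⟩ := hkey _ hc02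
        have hsub4 : ({β, I.i β, c0, I.i c0} : Finset (Letter d)) ⊆
            univ.filter (fun a : Letter d =>
              ¬π (some a) < π none ∧ ¬π (some (I.i a)) < π none) := by
          intro x hx
          simp only [Finset.mem_insert, Finset.mem_singleton] at hx
          rcases hx with rfl | rfl | rfl | rfl <;>
            simp only [mem_filter, mem_univ, true_and, I.invol]
          · exact ⟨not_lt.mpr hRβ.le, hiβ⟩
          · exact ⟨hiβ, not_lt.mpr hRβ.le⟩
          · exact ⟨not_lt.mpr hc0R.le, not_lt.mpr hic0R.le⟩
          · exact ⟨not_lt.mpr hic0R.le, not_lt.mpr hc0R.le⟩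
        have hd1 : β ∉ ({I.i β, c0, I.i c0} : Finset (Letter d)) := by
          simp only [Finset.mem_insert, Finset.mem_singleton]
          push_neg
          exact ⟨ne_inv I β, Ne.symm hc0β, Ne.symm hic0β⟩
        have hd2 : I.i β ∉ ({c0, I.i c0} : Finset (Letter d)) := by
          simp only [Finset.mem_insert, Finset.mem_singleton]
          push_neg
          constructor
          · intro h; exact hic0β (by rw [← h, I.invol])
          · intro h; exact hc0β ((inv_inj_iff I).mp h).symm
        have hd3 : c0 ∉ ({I.i c0} : Finset (Letter d)) := by
          simp [ne_inv I c0]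
        have hcard : ({β, I.i β, c0, I.i c0} : Finset (Letter d)).card = 4 := by
          rw [Finset.card_insert_of_notMem hd1, Finset.card_insert_of_notMem hd2,
            Finset.card_insert_of_notMem hd3, Finset.card_singleton]
        have hFR4 : 4 ≤ (univ.filter (fun a : Letter d =>
            ¬π (some a) < π none ∧ ¬π (some (I.i a)) < π none)).card :=
          hcard ▸ Finset.card_le_card hsub4
        exact construct_iv I π hadm α β hLα hRβ hiα hiβ hFR4
    · exact construct_mixed I π hadm α β hLα hRβ hiα hβα hne
  · rintro ⟨lam, hsym, hpos, hbal, hlt⟩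
    exact converse_dir I π hadm α β hα hβ lam hsym hpos hbal hlt

end Rauzy
end

section
/- In a Rauzy class with involution on an alphabet with d involution classes, any path γ in the Rauzy diagram that is a concatenation of 2d−3 complete paths is positive, i.e., the associated matrix B_γ ∈ SL(A/i, ℤ) has all entries strictly positive. -/
open Finset

namespace Rauzy

variable {d : ℕ}

/-!
Follow one column of `B_γ` along the path: its positive support only grows and is invariant
under `i`. If it does not grow across two consecutive complete paths `s t`, it is closed under
`winner ↦ loser` for all their arrows. The winner of an arrow keeps its extreme position, so it is
the winner or the loser of the next arrow; hence, starting from an arrow of `t` won by a class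
of the support, all winners of `s` lie in the support, and `s` is complete. So every two complete
paths add a class to the support until it is full. The first complete path already puts two
classes in the support of `B_γ e_y̲`, and `2(d - 2)` further ones bring it to all `d` classes.
-/

namespace Inv

variable (I : Inv d)

theorem involutive : Function.Involutive I.i := I.invol

theorem i_eq_or_i_eq_i_iff {x y : Letter d} : I.i x = y ∨ I.i x = I.i y ↔ x = y ∨ x = I.i y := by
  rw [I.involutive.eq_iff, I.involutive.injective.eq_iff, or_comm]

theorem card_add_two_le_of_ssubset {S T : Finset (Letter d)} (hST : S ⊂ T)
    (hS : ∀ x ∈ S, I.i x ∈ S) (hT : ∀ x ∈ T, I.i x ∈ T) : S.card + 2 ≤ T.card := by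
  obtain ⟨x, hxT, hxS⟩ := Finset.exists_of_ssubset hST
  have hixS : I.i x ∉ S := fun h => hxS (I.invol x ▸ hS _ h)
  have hdiff : 1 < (T \ S).card :=
    Finset.one_lt_card.2 ⟨x, by simp [hxT, hxS], I.i x, by simp [hT x hxT, hixS], (I.nofix x).symm⟩
  have := Finset.card_sdiff_add_card_eq_card hST.subset
  omega

end Inv

theorem zero_ne_last_of_letter (x : Letter d) : (0 : Pos d) ≠ Fin.last (2 * d) := by
  rw [ne_eq, Fin.ext_iff, Fin.val_zero, Fin.val_last]
  have := x.isLt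
  omega

namespace Arrow

variable {I : Inv d}

theorem loser_ne_winner (a : Arrow d I) : a.loser ≠ a.winner := by
  intro h
  apply zero_ne_last_of_letter a.winner
  rcases a.ok with ⟨-, hw, hl⟩ | ⟨-, hl, hw⟩ <;> rw [h] at hl
  · exact hw.symm.trans hl
  · exact hl.symm.trans hw

theorem loser_ne_i_winner (a : Arrow d I) : a.loser ≠ I.i a.winner := by
  rcases a.ok with ⟨⟨-, -, α, β, hα, hβ, hne, -⟩, hw, hl⟩ | ⟨⟨-, -, α, β, hα, hβ, hne, -⟩, hl, hw⟩
  · obtain rfl : α = a.winner := by simpa using hα.trans hw.symm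
    obtain rfl : β = a.loser := by simpa using hβ.trans hl.symm
    exact hne
  · obtain rfl : α = a.loser := by simpa using hα.trans hl.symm
    obtain rfl : β = a.winner := by simpa using hβ.trans hw.symm
    exact hne

theorem dst_winner (a : Arrow d I) : a.dst (some a.winner) = a.src (some a.winner) := by
  rcases a.ok with ⟨⟨-, -, _, _, _, _, _, hpre, -⟩, hw, -⟩ | ⟨⟨-, -, _, _, _, _, _, hpre, -⟩, -, hw⟩
  · exact hpre _ (hw ▸ Fin.zero_le _)
  · exact hpre _ (hw ▸ Fin.le_last _)

theorem winner_eq_or_of_dst_eq_src {a b : Arrow d I} (h : a.dst = b.src) :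
    a.winner = b.winner ∨ a.winner = b.loser := by
  have hend : b.src (some a.winner) = a.src (some a.winner) := h ▸ a.dst_winner
  rcases a.ok with ⟨-, ha, -⟩ | ⟨-, -, ha⟩ <;> rcases b.ok with ⟨-, hw, hl⟩ | ⟨-, hl, hw⟩ <;>
    rw [ha] at hend <;>
    first
    | exact Or.inl (by simpa using hend.trans hw.symm)
    | exact Or.inr (by simpa using hend.trans hl.symm)

end Arrow

section Support

variable {I : Inv d}

theorem IsPathList.winner_mem_of_winner_mem {S : Set (Letter d)} {m : List (Arrow d I)}
    {b : Arrow d I} (hpath : IsPathList I (m ++ [b]))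
    (hS : ∀ c ∈ m ++ [b], c.winner ∈ S → c.loser ∈ S) (hb : b.winner ∈ S) :
    ∀ a ∈ m, a.winner ∈ S :=
  (List.IsChain.iff_mem.1 hpath).backwards_concat_induction (fun a => a.winner ∈ S) m
    (fun _ y ⟨_, hy, hxy⟩ hwy =>
      (Arrow.winner_eq_or_of_dst_eq_src hxy).elim (· ▸ hwy) (· ▸ hS y hy hwy)) hb

theorem pathB_cons (a : Arrow d I) (l : List (Arrow d I)) (v : Letter d → ℝ) :
    pathB I (a :: l) v = pathB I l (arrowB I a v) := rfl

theorem pathB_append (l l' : List (Arrow d I)) (v : Letter d → ℝ) :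
    pathB I (l ++ l') v = pathB I l' (pathB I l v) :=
  List.foldl_append

theorem arrowB_loser (a : Arrow d I) (v : Letter d → ℝ) :
    arrowB I a v a.loser = v a.loser + v a.winner := by
  simp [arrowB]

theorem le_arrowB (a : Arrow d I) {v : Letter d → ℝ} (hv : 0 ≤ v) : v ≤ arrowB I a v := by
  intro x
  simp only [arrowB, le_add_iff_nonneg_right]
  split_ifs
  exacts [hv _, le_rfl]

theorem le_pathB (l : List (Arrow d I)) {v : Letter d → ℝ} (hv : 0 ≤ v) : v ≤ pathB I l v := by
  induction l generalizing v with
  | nil => exact le_rfl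
  | cons a l ih => exact (le_arrowB a hv).trans (ih (hv.trans (le_arrowB a hv)))

theorem pathB_nonneg (l : List (Arrow d I)) {v : Letter d → ℝ} (hv : 0 ≤ v) :
    0 ≤ pathB I l v :=
  hv.trans (le_pathB l hv)

theorem pathB_loser_pos {l : List (Arrow d I)} {a : Arrow d I} (ha : a ∈ l)
    {v : Letter d → ℝ} (hv : 0 ≤ v) (hw : 0 < v a.winner) : 0 < pathB I l v a.loser := by
  obtain ⟨u, u', rfl⟩ := List.append_of_mem ha
  have hu : 0 ≤ pathB I u v := pathB_nonneg u hv
  have hla : 0 < arrowB I a (pathB I u v) a.loser := by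
    rw [arrowB_loser]
    exact add_pos_of_nonneg_of_pos (hu _) (hw.trans_le (le_pathB u hv _))
  rw [pathB_append, pathB_cons]
  exact hla.trans_le (le_pathB u' (hu.trans (le_arrowB a hu)) _)

theorem Sym.arrowB {v : Letter d → ℝ} (hv : Sym I v) (a : Arrow d I) : Sym I (arrowB I a v) := by
  intro x
  simp only [Rauzy.arrowB, hv x, I.i_eq_or_i_eq_i_iff]

theorem Sym.pathB {v : Letter d → ℝ} (hv : Sym I v) (l : List (Arrow d I)) :
    Sym I (pathB I l v) := by
  induction l generalizing v with
  | nil => exact hv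
  | cons a l ih => exact ih (hv.arrowB a)

theorem sym_classBasis (y : Letter d) : Sym I (classBasis I y) := by
  intro x
  simp only [classBasis, I.i_eq_or_i_eq_i_iff]

theorem classBasis_nonneg (y : Letter d) : 0 ≤ classBasis I y := by
  intro x
  simp only [classBasis, Pi.zero_apply]
  split_ifs <;> norm_num

noncomputable def posSupport (v : Letter d → ℝ) : Finset (Letter d) :=
  univ.filter (0 < v ·)

@[simp]
theorem mem_posSupport {v : Letter d → ℝ} {x : Letter d} : x ∈ posSupport v ↔ 0 < v x := by
  simp [posSupport]

theorem posSupport_mono {v w : Letter d → ℝ} (h : v ≤ w) : posSupport v ⊆ posSupport w :=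
  fun x hx => mem_posSupport.2 ((mem_posSupport.1 hx).trans_le (h x))

theorem Sym.i_mem_posSupport {v : Letter d → ℝ} (hv : Sym I v) {x : Letter d}
    (hx : x ∈ posSupport v) : I.i x ∈ posSupport v := by
  rw [mem_posSupport, hv]
  exact mem_posSupport.1 hx

theorem posSupport_classBasis (y : Letter d) : posSupport (classBasis I y) = {y, I.i y} := by
  ext x
  simp only [mem_posSupport, classBasis, mem_insert, mem_singleton]
  split_ifs with h <;> simp [h]

end Support

section Growth

variable {I : Inv d} {v : Letter d → ℝ}

theorem posSupport_eq_univ_of_posSupport_pathB_eq (hv : 0 ≤ v) (hsym : Sym I v)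
    (hne : (posSupport v).Nonempty) {s t : List (Arrow d I)} (hs : CompletePath I s)
    (ht : CompletePath I t) (hpath : IsPathList I (s ++ t))
    (hstable : posSupport (pathB I (s ++ t) v) = posSupport v) : posSupport v = univ := by
  set S := posSupport v
  have hclosed : ∀ c ∈ s ++ t, c.winner ∈ S → c.loser ∈ S := fun c hc hw =>
    hstable ▸ mem_posSupport.2 (pathB_loser_pos hc hv (mem_posSupport.1 hw))
  obtain ⟨y, hy⟩ := hne
  obtain ⟨b, hbt, hby⟩ := ht y
  have hb : b.winner ∈ S := by
    rcases hby with h | h <;> rw [h]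
    exacts [hy, hsym.i_mem_posSupport hy]
  obtain ⟨t₁, t₂, rfl⟩ := List.append_of_mem hbt
  have hsplit : s ++ (t₁ ++ b :: t₂) = (s ++ t₁ ++ [b]) ++ t₂ := by simp
  rw [hsplit] at hpath hclosed
  have hwinners := IsPathList.winner_mem_of_winner_mem (S := (S : Set (Letter d)))
    (List.IsChain.left_of_append hpath) (fun c hc => hclosed c (List.mem_append_left _ hc)) hb
  refine eq_univ_of_forall fun x => ?_
  obtain ⟨a, has, hax⟩ := hs x
  have ha : a.winner ∈ S := hwinners a (List.mem_append_left _ has)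
  rcases hax with h | h
  · exact h ▸ ha
  · exact I.invol x ▸ hsym.i_mem_posSupport (h ▸ ha)

theorem min_card_add_two_le_card_posSupport_pathB (hv : 0 ≤ v) (hsym : Sym I v)
    (hne : (posSupport v).Nonempty) {s t : List (Arrow d I)} (hs : CompletePath I s)
    (ht : CompletePath I t) (hpath : IsPathList I (s ++ t)) :
    min (2 * d) ((posSupport v).card + 2) ≤ (posSupport (pathB I (s ++ t) v)).card := by
  have hsub : posSupport v ⊆ posSupport (pathB I (s ++ t) v) := posSupport_mono (le_pathB _ hv)
  rcases hsub.eq_or_ssubset with hstable | hgrow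
  · have huniv := posSupport_eq_univ_of_posSupport_pathB_eq hv hsym hne hs ht hpath hstable.symm
    rw [← hstable, huniv, card_univ, Fintype.card_fin]
    exact min_le_left _ _
  · exact (min_le_right _ _).trans <| I.card_add_two_le_of_ssubset hgrow
      (fun _ => hsym.i_mem_posSupport) (fun _ => (hsym.pathB _).i_mem_posSupport)

theorem min_card_add_le_card_posSupport_pathB_flatten (k : ℕ) {ls : List (List (Arrow d I))}
    (hlen : ls.length = 2 * k) (hcomp : ∀ s ∈ ls, CompletePath I s)
    (hpath : IsPathList I ls.flatten) (hv : 0 ≤ v) (hsym : Sym I v)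
    (hne : (posSupport v).Nonempty) :
    min (2 * d) ((posSupport v).card + 2 * k) ≤ (posSupport (pathB I ls.flatten v)).card := by
  induction k generalizing ls v with
  | zero => simp [List.eq_nil_of_length_eq_zero hlen, pathB]
  | succ k ih =>
    obtain ⟨s, t, rest, rfl⟩ : ∃ s t rest, ls = s :: t :: rest := by
      match ls, hlen with
      | s :: t :: rest, _ => exact ⟨s, t, rest, rfl⟩
    have hflat : (s :: t :: rest).flatten = (s ++ t) ++ rest.flatten := by simp
    rw [hflat] at hpath ⊢
    rw [pathB_append]
    have hpair := min_card_add_two_le_card_posSupport_pathB hv hsym hne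
      (hcomp s (by simp)) (hcomp t (by simp)) (List.IsChain.left_of_append hpath)
    have hrest := ih (v := pathB I (s ++ t) v) (ls := rest) (by simp at hlen; omega)
      (fun u hu => hcomp u (by simp [hu]))
      (List.IsChain.right_of_append hpath) (pathB_nonneg _ hv) (hsym.pathB _)
      (hne.mono (posSupport_mono (le_pathB _ hv)))
    omega

theorem four_le_card_posSupport_pathB_classBasis {s : List (Arrow d I)} (hs : CompletePath I s)
    (y : Letter d) : 4 ≤ (posSupport (pathB I s (classBasis I y))).card := by
  obtain ⟨b, hbs, hby⟩ := hs y
  have hloser : b.loser ∈ posSupport (pathB I s (classBasis I y)) := by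
    refine mem_posSupport.2 (pathB_loser_pos hbs (classBasis_nonneg y) ?_)
    rcases hby with h | h <;> simp [classBasis, h]
  have hloser_new : b.loser ∉ posSupport (classBasis I y) := by
    rw [posSupport_classBasis, mem_insert, mem_singleton]
    rcases hby with rfl | h
    · exact not_or.2 ⟨b.loser_ne_winner, b.loser_ne_i_winner⟩
    · obtain rfl : y = I.i b.winner := by rw [h, I.invol]
      rw [I.invol]
      exact not_or.2 ⟨b.loser_ne_i_winner, b.loser_ne_winner⟩
  have hgrow : posSupport (classBasis I y) ⊂ posSupport (pathB I s (classBasis I y)) :=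
    ssubset_of_subset_of_ne (posSupport_mono (le_pathB _ (classBasis_nonneg y)))
      fun h => hloser_new (h ▸ hloser)
  have hcard := I.card_add_two_le_of_ssubset hgrow (fun _ => (sym_classBasis y).i_mem_posSupport)
    (fun _ => ((sym_classBasis y).pathB _).i_mem_posSupport)
  rwa [posSupport_classBasis, card_pair (I.nofix y).symm] at hcard

end Growth

theorem kComplete_path_positive_general
    {d : ℕ} (hd : 2 ≤ d) (I : Inv d)
    (l : List (Arrow d I)) (hpath : IsPathList I l)
    (hcomp : KComplete I (2*d - 3) l) :
    PositivePath I l := by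
  intro x y
  obtain ⟨ls, hlen, rfl, hcompl⟩ := hcomp
  obtain ⟨s, rest, rfl⟩ := List.exists_cons_of_length_eq_add_one
    (hlen.trans (by omega : 2 * d - 3 = 2 * (d - 2) + 1))
  rw [List.flatten_cons] at hpath ⊢
  rw [pathB_append]
  have hfirst := four_le_card_posSupport_pathB_classBasis (hcompl s (by simp)) y
  have hrest := min_card_add_le_card_posSupport_pathB_flatten (d - 2) (ls := rest)
    (by simp at hlen; omega) (fun u hu => hcompl u (by simp [hu]))
    (List.IsChain.right_of_append hpath) (pathB_nonneg _ (classBasis_nonneg y))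
    ((sym_classBasis y).pathB _) (card_pos.1 (lt_of_lt_of_le (by norm_num) hfirst))
  have hfull : posSupport (pathB I rest.flatten (pathB I s (classBasis I y))) = univ := by
    rw [← card_eq_iff_eq_univ, Fintype.card_fin]
    exact le_antisymm ((card_le_univ _).trans_eq (Fintype.card_fin _)) (by omega)
  exact mem_posSupport.1 (hfull ▸ mem_univ x)

/-- In a Rauzy class with involution on an alphabet with `d` involution classes, every
`(2d−3)`-complete path is positive: the matrix `B_γ` has all entries strictly positive. -/
theorem kComplete_path_positive
    {d : ℕ} (hd : 2 ≤ d) (I : Inv d) (R : Set (RPerm d)) (hR : IsRauzyClass I R)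
    (l : List (Arrow d I)) (hpath : IsPathList I l)
    (hin : ∀ a ∈ l, a.src ∈ R ∧ a.dst ∈ R)
    (hcomp : KComplete I (2*d - 3) l) :
    PositivePath I l :=
  kComplete_path_positive_general hd I l hpath hcomp

end Rauzy
end

section
/- Let π be a permutation in a Rauzy class with involution and τ ∈ Θ_π, where Θ_π is the set of τ in the hyperplane S_π with all partial sums Σ_{π(*)<π(ξ)≤k} τ_ξ̲ > 0 for π(*) < k < 2d+1 and Σ_{k≤π(ξ)<π(*)} τ_ξ̲ < 0 for 1 < k < π(*). Then the height vector h = −Ω(π)·τ has all coordinates strictly positive. -/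
open Finset

namespace Rauzy

variable {d : ℕ}

section ProofAux

variable {d : ℕ}

private def pref (π : RPerm d) (τ : Letter d → ℝ) (k : ℕ) : ℝ :=
  ∑ x ∈ univ.filter (fun x => (π (some x)).val < k), τ x

private lemma pos_ne_star (π : RPerm d) (x : Letter d) :
    (π (some x)).val ≠ (π none).val := fun h => by
  have h2 : π (some x) = π none := Fin.val_injective h
  simpa using π.injective h2

private lemma eq_of_pos_eq (π : RPerm d) {x y : Letter d}
    (h : (π (some x)).val = (π (some y)).val) : x = y := by
  have h2 : π (some x) = π (some y) := Fin.val_injective h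
  simpa using π.injective h2

private lemma pref_split (π : RPerm d) (τ : Letter d → ℝ) {j k : ℕ} (hjk : j ≤ k) :
    pref π τ k = pref π τ j
      + ∑ x ∈ univ.filter (fun x => j ≤ (π (some x)).val ∧ (π (some x)).val < k), τ x := by
  have h := Finset.sum_filter_add_sum_filter_not
      (univ.filter (fun x : Letter d => (π (some x)).val < k))
      (fun x => (π (some x)).val < j) τ
  rw [Finset.filter_filter, Finset.filter_filter] at h
  have e1 : univ.filter (fun x : Letter d => (π (some x)).val < k ∧ (π (some x)).val < j)
      = univ.filter (fun x => (π (some x)).val < j) := by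
    ext x; simp only [mem_filter, mem_univ, true_and]; omega
  have e2 : univ.filter (fun x : Letter d => (π (some x)).val < k ∧ ¬ (π (some x)).val < j)
      = univ.filter (fun x => j ≤ (π (some x)).val ∧ (π (some x)).val < k) := by
    ext x; simp only [mem_filter, mem_univ, true_and]; omega
  rw [e1, e2] at h
  unfold pref
  linarith

private lemma pref_succ (π : RPerm d) (τ : Letter d → ℝ) (y : Letter d) :
    pref π τ ((π (some y)).val + 1) = pref π τ (π (some y)).val + τ y := by
  rw [pref_split π τ (Nat.le_succ (π (some y)).val)]
  congr 1
  have e : univ.filter (fun x : Letter d =>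
      (π (some y)).val ≤ (π (some x)).val ∧ (π (some x)).val < (π (some y)).val + 1) = {y} := by
    ext x
    simp only [mem_filter, mem_univ, true_and, mem_singleton]
    constructor
    · intro h
      exact eq_of_pos_eq π (by omega)
    · rintro rfl; omega
  rw [e, Finset.sum_singleton]

private lemma pref_star_succ (π : RPerm d) (τ : Letter d → ℝ) :
    pref π τ ((π none).val + 1) = pref π τ (π none).val := by
  rw [pref_split π τ (Nat.le_succ (π none).val)]
  have e : univ.filter (fun x : Letter d =>
      (π none).val ≤ (π (some x)).val ∧ (π (some x)).val < (π none).val + 1) = ∅ := by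
    ext x
    simp only [mem_filter, mem_univ, true_and, Finset.notMem_empty, iff_false]
    have := pos_ne_star π x
    omega
  rw [e, Finset.sum_empty, add_zero]

private lemma pref_total (π : RPerm d) (τ : Letter d → ℝ) (hbal : Balanced π τ) :
    pref π τ (2*d+1) = 2 * pref π τ (π none).val := by
  have h1 : pref π τ (π none).val
      = ∑ a ∈ univ.filter (fun a => π (some a) < π none), τ a := by
    apply Finset.sum_congr _ (fun _ _ => rfl)
    ext x; simp only [mem_filter, mem_univ, true_and, Fin.lt_def]
  have h2 := pref_split π τ (show (π none).val ≤ 2*d+1 by have := (π none).isLt; omega)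
  have h3 : ∑ x ∈ univ.filter (fun x : Letter d =>
        (π none).val ≤ (π (some x)).val ∧ (π (some x)).val < 2*d+1), τ x
      = ∑ a ∈ univ.filter (fun a => π none < π (some a)), τ a := by
    apply Finset.sum_congr _ (fun _ _ => rfl)
    ext x
    simp only [mem_filter, mem_univ, true_and, Fin.lt_def]
    have := pos_ne_star π x
    have := (π (some x)).isLt
    omega
  rw [h3] at h2
  rw [h2, h1, hbal]
  ring

private lemma pref_lt_of (π : RPerm d) (τ : Letter d → ℝ)
    (H1 : ∀ k : ℕ, (π none).val < k → k < 2*d →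
      0 < ∑ a ∈ univ.filter (fun a => (π none).val < (π (some a)).val ∧ (π (some a)).val ≤ k), τ a)
    (H2 : ∀ k : ℕ, 0 < k → k < (π none).val →
      ∑ a ∈ univ.filter (fun a => k ≤ (π (some a)).val ∧ (π (some a)).val < (π none).val), τ a < 0)
    {k : ℕ} (h1 : 1 ≤ k) (h2 : k ≤ 2*d) (h3 : k ≠ (π none).val) (h4 : k ≠ (π none).val + 1) :
    pref π τ (π none).val < pref π τ k := by
  rcases Nat.lt_or_ge k (π none).val with hk | hk
  · have hsp := pref_split π τ (le_of_lt hk)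
    have := H2 k h1 hk
    linarith
  · have hk2 : (π none).val < k := by omega
    have hsp := pref_split π τ (le_of_lt hk2)
    have e : ∑ x ∈ univ.filter (fun x : Letter d =>
          (π none).val ≤ (π (some x)).val ∧ (π (some x)).val < k), τ x
        = ∑ a ∈ univ.filter (fun a : Letter d =>
          (π none).val < (π (some a)).val ∧ (π (some a)).val ≤ k - 1), τ a := by
      apply Finset.sum_congr _ (fun _ _ => rfl)
      ext x
      simp only [mem_filter, mem_univ, true_and]
      have := pos_ne_star π x
      omega
    rw [e] at hsp
    have := H1 (k-1) (by omega) (by omega)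
    linarith

private lemma pref_le_of (π : RPerm d) (τ : Letter d → ℝ)
    (H1 : ∀ k : ℕ, (π none).val < k → k < 2*d →
      0 < ∑ a ∈ univ.filter (fun a => (π none).val < (π (some a)).val ∧ (π (some a)).val ≤ k), τ a)
    (H2 : ∀ k : ℕ, 0 < k → k < (π none).val →
      ∑ a ∈ univ.filter (fun a => k ≤ (π (some a)).val ∧ (π (some a)).val < (π none).val), τ a < 0)
    {k : ℕ} (h1 : 1 ≤ k) (h2 : k ≤ 2*d) :
    pref π τ (π none).val ≤ pref π τ k := by
  by_cases hp : k = (π none).val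
  · rw [hp]
  by_cases hp1 : k = (π none).val + 1
  · rw [hp1, pref_star_succ]
  exact le_of_lt (pref_lt_of π τ H1 H2 h1 h2 hp hp1)

private lemma no_adjacent (I : Inv d) (π : RPerm d) (τ : Letter d → ℝ)
    (hadm : Admissible I π) (hs : Sym I τ)
    (H1 : ∀ k : ℕ, (π none).val < k → k < 2*d →
      0 < ∑ a ∈ univ.filter (fun a => (π none).val < (π (some a)).val ∧ (π (some a)).val ≤ k), τ a)
    (H2 : ∀ k : ℕ, 0 < k → k < (π none).val →
      ∑ a ∈ univ.filter (fun a => k ≤ (π (some a)).val ∧ (π (some a)).val < (π none).val), τ a < 0)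
    (b : Letter d)
    (hb : (π (some b)).val + 1 = (π none).val)
    (hib : (π (some (I.i b))).val = (π none).val + 1) : False := by
  by_cases hp2 : 2 ≤ (π none).val
  · by_cases hp2d : (π none).val + 1 < 2*d
    · have e2 : univ.filter (fun a : Letter d =>
          (π none).val - 1 ≤ (π (some a)).val ∧ (π (some a)).val < (π none).val) = {b} := by
        ext x
        simp only [mem_filter, mem_univ, true_and, mem_singleton]
        constructor
        · intro h
          exact eq_of_pos_eq π (by omega)
        · rintro rfl; omega
      have hneg := H2 ((π none).val - 1) (by omega) (by omega)
      rw [e2, Finset.sum_singleton] at hneg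
      have e1 : univ.filter (fun a : Letter d =>
          (π none).val < (π (some a)).val ∧ (π (some a)).val ≤ (π none).val + 1) = {I.i b} := by
        ext x
        simp only [mem_filter, mem_univ, true_and, mem_singleton]
        constructor
        · intro h
          exact eq_of_pos_eq π (by omega)
        · rintro rfl; omega
      have hposi := H1 ((π none).val + 1) (by omega) hp2d
      rw [e1, Finset.sum_singleton, hs b] at hposi
      linarith
    · -- π none has value 2*d - 1, I.i b is at the last position
      apply hadm.2
      intro c hc
      have hcv : (π none).val < (π (some c)).val := Fin.lt_def.mp hc
      have hlt := (π (some c)).isLt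
      have : c = I.i b := eq_of_pos_eq π (by omega)
      rw [this, I.invol]
      exact Fin.lt_def.mpr (by omega)
  · -- π none has value 1, b is at the first position
    apply hadm.1
    intro c hc
    have hcv : (π (some c)).val < (π none).val := Fin.lt_def.mp hc
    have : c = b := eq_of_pos_eq π (by omega)
    rw [this]
    exact Fin.lt_def.mpr (by omega)

private lemma aux_pos (I : Inv d) (π : RPerm d) (τ : Letter d → ℝ)
    (hadm : Admissible I π) (hs : Sym I τ)
    (H1 : ∀ k : ℕ, (π none).val < k → k < 2*d →
      0 < ∑ a ∈ univ.filter (fun a => (π none).val < (π (some a)).val ∧ (π (some a)).val ≤ k), τ a)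
    (H2 : ∀ k : ℕ, 0 < k → k < (π none).val →
      ∑ a ∈ univ.filter (fun a => k ≤ (π (some a)).val ∧ (π (some a)).val < (π none).val), τ a < 0)
    (b : Letter d)
    (hlt : (π (some b)).val < (π (some (I.i b))).val) :
    0 < (pref π τ ((π (some b)).val + 1) - pref π τ (π none).val)
      + (pref π τ (π (some (I.i b))).val - pref π τ (π none).val) := by
  have hM2d : (π (some (I.i b))).val ≤ 2*d := by
    have := (π (some (I.i b))).isLt; omega
  have hmp : (π (some b)).val ≠ (π none).val := pos_ne_star π b
  have hMp : (π (some (I.i b))).val ≠ (π none).val := pos_ne_star π (I.i b)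
  by_cases hdeg : (π (some b)).val + 1 = (π none).val ∧ (π (some (I.i b))).val = (π none).val + 1
  · exact (no_adjacent I π τ hadm hs H1 H2 b hdeg.1 hdeg.2).elim
  · have hle1 : pref π τ (π none).val ≤ pref π τ ((π (some b)).val + 1) :=
      pref_le_of π τ H1 H2 (by omega) (by omega)
    have hle2 : pref π τ (π none).val ≤ pref π τ (π (some (I.i b))).val :=
      pref_le_of π τ H1 H2 (by omega) (by omega)
    rcases not_and_or.mp hdeg with h | h
    · have := pref_lt_of π τ H1 H2 (by omega) (by omega) h (by omega)
      linarith
    · have := pref_lt_of π τ H1 H2 (by omega) (by omega) hMp h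
      linarith

private lemma neg_omega_eq (I : Inv d) (π : RPerm d) (τ : Letter d → ℝ)
    (hbal : Balanced π τ) (a : Letter d) :
    -omegaApply I π τ a
      = pref π τ (π (some a)).val + pref π τ ((π (some (I.i a))).val + 1)
        - 2 * pref π τ (π none).val := by
  unfold omegaApply
  have hB : ∑ x ∈ univ.filter (fun x => π (some x) < π (some a)), τ x
      = pref π τ (π (some a)).val := by
    apply Finset.sum_congr _ (fun _ _ => rfl)
    ext x; simp only [mem_filter, mem_univ, true_and, Fin.lt_def]
  have h := Finset.sum_filter_add_sum_filter_not (univ : Finset (Letter d))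
      (fun x => (π (some x)).val < (π (some (I.i a))).val + 1) τ
  have e1 : univ.filter (fun x : Letter d =>
      ¬ (π (some x)).val < (π (some (I.i a))).val + 1)
      = univ.filter (fun x => π (some (I.i a)) < π (some x)) := by
    ext x; simp only [mem_filter, mem_univ, true_and, Fin.lt_def]; omega
  have e2 : ∑ x ∈ (univ : Finset (Letter d)), τ x = pref π τ (2*d+1) := by
    apply Finset.sum_congr _ (fun _ _ => rfl)
    symm
    apply Finset.filter_true_of_mem
    intro x _
    exact (π (some x)).isLt
  rw [e1, e2, pref_total π τ hbal] at h
  have hA : ∑ x ∈ univ.filter (fun x => π (some (I.i a)) < π (some x)), τ x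
      = 2 * pref π τ (π none).val - pref π τ ((π (some (I.i a))).val + 1) := by
    have : pref π τ ((π (some (I.i a))).val + 1)
        = ∑ x ∈ univ.filter (fun x : Letter d =>
            (π (some x)).val < (π (some (I.i a))).val + 1), τ x := rfl
    linarith
  rw [hA, hB]
  ring

end ProofAux

/-- If `π` is a permutation in a Rauzy class with involution and `τ ∈ Θ_π`, then the
height vector `h = −Ω(π)·τ` has all coordinates strictly positive. -/
theorem height_vector_positive
    {d : ℕ} (I : Inv d) (π : RPerm d) (hirr : Irreducible I π)
    (τ : Letter d → ℝ) (hτ : MemTheta I π τ) :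
    ∀ a : Letter d, 0 < -omegaApply I π τ a := by
  intro a
  obtain ⟨R, hR, hπR⟩ := hirr
  have hadm : Admissible I π := hR.2.1 π hπR
  obtain ⟨⟨hs, hbal⟩, hth1, hth2⟩ := hτ
  have H1 : ∀ k : ℕ, (π none).val < k → k < 2*d →
      0 < ∑ x ∈ univ.filter (fun x => (π none).val < (π (some x)).val ∧ (π (some x)).val ≤ k), τ x := by
    intro k hk1 hk2
    have hk : k < 2*d+1 := by omega
    have h := hth1 ⟨k, hk⟩ (Fin.lt_def.mpr hk1) (by simpa using hk2)
    have e : univ.filter (fun x : Letter d =>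
        (π none).val < (π (some x)).val ∧ (π (some x)).val ≤ k)
        = univ.filter (fun x => π none < π (some x) ∧ π (some x) ≤ (⟨k, hk⟩ : Pos d)) := by
      ext x; simp only [mem_filter, mem_univ, true_and, Fin.lt_def, Fin.le_def]
    rw [e]
    exact h
  have H2 : ∀ k : ℕ, 0 < k → k < (π none).val →
      ∑ x ∈ univ.filter (fun x => k ≤ (π (some x)).val ∧ (π (some x)).val < (π none).val), τ x < 0 := by
    intro k hk1 hk2
    have hk : k < 2*d+1 := by have := (π none).isLt; omega
    have h := hth2 ⟨k, hk⟩ (by simpa using hk1) (Fin.lt_def.mpr hk2)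
    have e : univ.filter (fun x : Letter d =>
        k ≤ (π (some x)).val ∧ (π (some x)).val < (π none).val)
        = univ.filter (fun x => (⟨k, hk⟩ : Pos d) ≤ π (some x) ∧ π (some x) < π none) := by
      ext x; simp only [mem_filter, mem_univ, true_and, Fin.lt_def, Fin.le_def]
    rw [e]
    exact h
  have hform := neg_omega_eq I π τ hbal a
  have hne : (π (some a)).val ≠ (π (some (I.i a))).val := fun h =>
    I.nofix a (eq_of_pos_eq π h).symm
  rcases Nat.lt_or_ge (π (some a)).val (π (some (I.i a))).val with hlt | hge
  · have key := aux_pos I π τ hadm hs H1 H2 a hlt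
    have e1 := pref_succ π τ a
    have e2 := pref_succ π τ (I.i a)
    have e3 : τ (I.i a) = τ a := hs a
    rw [hform]
    linarith
  · have hlt2 : (π (some (I.i a))).val < (π (some a)).val := by omega
    have key := aux_pos I π τ hadm hs H1 H2 (I.i a) (by rw [I.invol]; exact hlt2)
    rw [I.invol] at key
    rw [hform]
    linarith


end Rauzy
end

section
/- If γ is an arrow of the Rauzy diagram with involution taking (λ, π) to (λ', π') under the Rauzy induction with involution, then the translation vectors satisfy w' = B_γ · w, where w = Ω(π)·λ and w' = Ω(π')·λ'. -/
open Finset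

namespace Rauzy

variable {d : ℕ}

/-!
For symmetric `v` one has `(Ω(π)·v)_c = Σ v − v_c − (P(c) + P(i c))`, where `P(u)` is the sum
of `v` over the letters to the left of `u`. A left operation moves the loser `β` from the far
right to just after `i(α)`, which changes each `P(u)` by `0` or `λ'_β`; passing from `λ'` to
`λ = B*_γ·λ'` changes them by multiples of `λ'_β` as well, and comparing the two gives
`w' = B_γ·w` letter by letter, the class of `β` being the only special case. Reversing the order
of positions negates `Ω` and turns a right operation into a left one with winner and loser
exchanged, so the right case follows from the left one.
-/

section Sums

variable {X M : Type*} [Fintype X] [DecidableEq X] [AddCommMonoid M]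

theorem sum_filter_eq_sum_filter_ne_add (P : X → Prop) [DecidablePred P] (f : X → M) (z : X) :
    ∑ x ∈ univ.filter P, f x
      = ∑ x ∈ univ.filter (fun x => x ≠ z ∧ P x), f x + if P z then f z else 0 := by
  split_ifs with hz
  · rw [add_comm, ← Finset.sum_insert (by simp)]
    congr 1
    ext x
    by_cases x = z <;> simp_all
  · rw [add_zero]
    congr 1
    ext x
    by_cases x = z <;> simp_all

end Sums

def prefixSum (π : RPerm d) (v : Letter d → ℝ) (p : Pos d) : ℝ :=
  ∑ x ∈ univ.filter (fun x => π (some x) < p), v x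

theorem sum_filter_gt_eq_sub_prefixSum (π : RPerm d) (v : Letter d → ℝ) (y : Letter d) :
    ∑ x ∈ univ.filter (fun x => π (some y) < π (some x)), v x
      = ∑ x, v x - v y - prefixSum π v (π (some y)) := by
  have hsplit := sum_filter_eq_sum_filter_ne_add (fun x => ¬ π (some x) < π (some y)) v y
  have hcongr : univ.filter (fun x => x ≠ y ∧ ¬ π (some x) < π (some y))
      = univ.filter (fun x => π (some y) < π (some x)) := by
    refine Finset.filter_congr fun x _ => ⟨fun ⟨hne, h⟩ => ?_, fun h => ⟨?_, not_lt.2 h.le⟩⟩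
    · exact lt_of_le_of_ne (not_lt.1 h) fun e => hne (by simpa using π.injective e.symm)
    · rintro rfl
      exact lt_irrefl _ h
  rw [if_pos (lt_irrefl _), hcongr] at hsplit
  rw [prefixSum, ← Finset.sum_filter_add_sum_filter_not univ (fun x => π (some x) < π (some y)),
    hsplit]
  ring

theorem omegaApply_eq {I : Inv d} {v : Letter d → ℝ} (hv : Sym I v) (π : RPerm d) (c : Letter d) :
    omegaApply I π v c
      = ∑ x, v x - v c - (prefixSum π v (π (some c)) + prefixSum π v (π (some (I.i c)))) := by
  rw [omegaApply, sum_filter_gt_eq_sub_prefixSum, hv]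
  unfold prefixSum
  ring

theorem Sym.omegaApply {I : Inv d} {v : Letter d → ℝ} (hv : Sym I v) (π : RPerm d) :
    Sym I (omegaApply I π v) := by
  intro c
  rw [omegaApply_eq hv, omegaApply_eq hv, I.invol, hv]
  ring

def RPerm.rev (π : RPerm d) : RPerm d := π.trans Fin.revPerm

theorem RPerm.rev_apply (π : RPerm d) (u : Option (Letter d)) : π.rev u = (π u).rev := rfl

theorem omegaApply_rev {I : Inv d} {v : Letter d → ℝ} (hv : Sym I v) (π : RPerm d) :
    omegaApply I π.rev v = -omegaApply I π v := by
  funext c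
  simp only [omegaApply, RPerm.rev_apply, Fin.rev_lt_rev, Pi.neg_apply]
  rw [sum_filter_gt_eq_sub_prefixSum, sum_filter_gt_eq_sub_prefixSum, hv]
  unfold prefixSum
  ring

theorem Inv.i_inj (I : Inv d) {a b : Letter d} : I.i a = I.i b ↔ a = b :=
  (Function.LeftInverse.injective I.invol).eq_iff

theorem Inv.i_eq_iff (I : Inv d) {a b : Letter d} : I.i a = b ↔ a = I.i b := by
  rw [← I.i_inj, I.invol]

def addToClass (I : Inv d) (w l : Letter d) (v : Letter d → ℝ) : Letter d → ℝ :=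
  fun x => v x + if x = l ∨ x = I.i l then v w else 0

theorem arrowB_eq_addToClass (I : Inv d) (a : Arrow d I) :
    arrowB I a = addToClass I a.winner a.loser := rfl

theorem arrowBt_eq_addToClass (I : Inv d) (a : Arrow d I) :
    arrowBt I a = addToClass I a.loser a.winner := rfl

theorem Sym.addToClass {I : Inv d} {v : Letter d → ℝ} (hv : Sym I v) (w l : Letter d) :
    Sym I (addToClass I w l v) := by
  intro x
  simp only [Rauzy.addToClass, hv x, I.i_eq_iff, I.invol, or_comm]

theorem addToClass_neg (I : Inv d) (w l : Letter d) (f : Letter d → ℝ) :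
    addToClass I w l (-f) = -addToClass I w l f := by
  funext x
  simp only [addToClass, Pi.neg_apply]
  split_ifs <;> ring

theorem sum_addToClass (I : Inv d) (w l : Letter d) (v : Letter d → ℝ) (s : Finset (Letter d)) :
    ∑ x ∈ s, addToClass I w l v x
      = ∑ x ∈ s, v x + ((if l ∈ s then v w else 0) + (if I.i l ∈ s then v w else 0)) := by
  have hsplit : ∀ x, (if x = l ∨ x = I.i l then v w else 0)
      = (if x = l then v w else 0) + (if x = I.i l then v w else 0) := by
    intro x
    by_cases hx : x = l
    · simp [hx, (I.nofix l).symm]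
    · simp [hx]
  simp only [addToClass, hsplit, Finset.sum_add_distrib, Finset.sum_ite_eq']

theorem prefixSum_addToClass (I : Inv d) (w l : Letter d) (v : Letter d → ℝ) (π : RPerm d)
    (p : Pos d) :
    prefixSum π (addToClass I w l v) p = prefixSum π v p
      + ((if π (some l) < p then v w else 0) + (if π (some (I.i l)) < p then v w else 0)) := by
  simp only [prefixSum, sum_addToClass, Finset.mem_filter, Finset.mem_univ, true_and]

theorem prefixSum_add_ite_eq_of_lt_iff {π π' : RPerm d} {z : Letter d} {p p' : Pos d}
    (h : ∀ x, x ≠ z → (π' (some x) < p' ↔ π (some x) < p)) (v : Letter d → ℝ) :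
    prefixSum π' v p' + (if π (some z) < p then v z else 0)
      = prefixSum π v p + (if π' (some z) < p' then v z else 0) := by
  rw [prefixSum, prefixSum, sum_filter_eq_sum_filter_ne_add _ _ z,
    sum_filter_eq_sum_filter_ne_add (fun x => π (some x) < p) _ z,
    Finset.filter_congr fun x _ => and_congr_right (h x)]
  ring

theorem prefixSum_of_val_eq_succ {π : RPerm d} {x y : Letter d}
    (h : (π (some y) : ℕ) = π (some x) + 1) (v : Letter d → ℝ) :
    prefixSum π v (π (some y)) = prefixSum π v (π (some x)) + v x := by
  have hcongr : ∀ z, z ≠ x → (π (some z) < π (some y) ↔ π (some z) < π (some x)) := by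
    intro z hz
    have : (π (some z) : ℕ) ≠ π (some x) := fun e => hz (by simpa using π.injective (Fin.ext e))
    rw [Fin.lt_def, Fin.lt_def]
    omega
  have := prefixSum_add_ite_eq_of_lt_iff hcongr v
  rw [if_neg (lt_irrefl _), if_pos (show π (some x) < π (some y) by rw [Fin.lt_def]; omega)]
    at this
  linarith

theorem prefixSum_first (π : RPerm d) (v : Letter d → ℝ) {y : Letter d}
    (hy : π (some y) = 0) : prefixSum π v (π (some y)) = 0 :=
  Finset.sum_eq_zero fun _ hx => absurd (Finset.mem_filter.1 hx).2 (hy ▸ Fin.not_lt_zero _)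

theorem prefixSum_last (π : RPerm d) (v : Letter d → ℝ) {y : Letter d}
    (hy : π (some y) = Fin.last (2*d)) :
    prefixSum π v (π (some y)) = ∑ x, v x - v y := by
  have hempty := sum_filter_gt_eq_sub_prefixSum π v y
  rw [hy, Finset.filter_false_of_mem fun _ _ => not_lt.2 (Fin.le_last _), Finset.sum_empty]
    at hempty
  rw [hy]
  linarith

theorem lt_apply_iff_of_eq_zero {π : RPerm d} {y : Letter d} (hy : π (some y) = 0)
    {u : Option (Letter d)} : π (some y) < π u ↔ u ≠ some y := by
  rw [hy, Fin.pos_iff_ne_zero, ← hy]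
  exact π.injective.ne_iff

theorem apply_lt_of_eq_last {π : RPerm d} {y : Letter d} (hy : π (some y) = Fin.last (2*d))
    {u : Option (Letter d)} (hu : u ≠ some y) : π u < π (some y) := by
  rw [hy, Fin.lt_last_iff_ne_last, ← hy]
  exact fun e => hu (π.injective e)


structure LeftMove (I : Inv d) (π π' : RPerm d) (α β : Letter d) : Prop where
  first : π (some α) = 0
  last : π (some β) = Fin.last (2*d)
  ne_inv : β ≠ I.i α
  eq_of_le : ∀ x, π x ≤ π (some (I.i α)) → π' x = π x
  val_moved : (π' (some β) : ℕ) = π (some (I.i α)) + 1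
  val_of_gt : ∀ x, x ≠ some β → π (some (I.i α)) < π x → (π' x : ℕ) = π x + 1

namespace LeftMove

variable {I : Inv d} {π π' : RPerm d} {α β : Letter d}

theorem val (hM : LeftMove I π π' α β) {u : Option (Letter d)} (hu : u ≠ some β) :
    (π' u : ℕ) = π u + if π (some (I.i α)) < π u then 1 else 0 := by
  split_ifs with h
  · exact hM.val_of_gt u hu h
  · rw [hM.eq_of_le u (not_lt.1 h), add_zero]

theorem lt_iff (hM : LeftMove I π π' α β) {u u' : Option (Letter d)} (hu : u ≠ some β)
    (hu' : u' ≠ some β) : π' u < π' u' ↔ π u < π u' := by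
  simp only [Fin.lt_def, hM.val hu, hM.val hu']
  split_ifs <;> omega

theorem moved_lt_iff (hM : LeftMove I π π' α β) {u : Option (Letter d)} (hu : u ≠ some β) :
    π' (some β) < π' u ↔ π (some (I.i α)) < π u := by
  simp only [Fin.lt_def, hM.val hu, hM.val_moved]
  split_ifs <;> omega

theorem prefixSum_dst (hM : LeftMove I π π' α β) (v : Letter d → ℝ) {u : Option (Letter d)}
    (hu : u ≠ some β) :
    prefixSum π' v (π' u) = prefixSum π v (π u) + if π (some (I.i α)) < π u then v β else 0 := by
  have :=
    prefixSum_add_ite_eq_of_lt_iff (fun x hx => hM.lt_iff ((Option.some_injective _).ne hx) hu) v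
  rw [if_neg (not_lt.2 (hM.last ▸ Fin.le_last _)), add_zero] at this
  simpa only [hM.moved_lt_iff hu] using this

theorem prefixSum_dst_moved (hM : LeftMove I π π' α β) (v : Letter d → ℝ) :
    prefixSum π' v (π' (some β)) = prefixSum π v (π (some (I.i α))) + v (I.i α) := by
  have hiα : some (I.i α) ≠ some β := (Option.some_injective _).ne hM.ne_inv.symm
  rw [prefixSum_of_val_eq_succ (x := I.i α) (by rw [hM.val_moved, hM.eq_of_le _ le_rfl]),
    hM.prefixSum_dst v hiα, if_neg (lt_irrefl _), add_zero]

theorem omegaApply_dst_of_ne (hM : LeftMove I π π' α β) {v : Letter d → ℝ} (hv : Sym I v)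
    {c : Letter d} (hc : c ≠ β) (hic : I.i c ≠ β) :
    omegaApply I π' v c = omegaApply I π (addToClass I β α v) c := by
  have hc' : some c ≠ some β := (Option.some_injective _).ne hc
  have hic' : some (I.i c) ≠ some β := (Option.some_injective _).ne hic
  rw [omegaApply_eq hv, hM.prefixSum_dst v hc', hM.prefixSum_dst v hic',
    omegaApply_eq (hv.addToClass β α), prefixSum_addToClass, prefixSum_addToClass,
    sum_addToClass]
  simp only [addToClass, Finset.mem_univ, if_true, lt_apply_iff_of_eq_zero hM.first, ne_eq,
    Option.some.injEq]
  by_cases hcα : c = α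
  · subst hcα
    simp only [lt_self_iff_false, ↓reduceIte, add_zero, true_or, not_true_eq_false, zero_add,
      I.nofix, not_false_eq_true]
    ring
  · by_cases hciα : c = I.i α
    · subst hciα
      simp only [lt_self_iff_false, ↓reduceIte, add_zero, I.invol, I.nofix, or_true,
        not_false_eq_true, not_true_eq_false, zero_add]
      ring
    · simp only [hcα, hciα, or_self, ↓reduceIte, add_zero, not_false_eq_true, I.i_eq_iff]
      ring

theorem omegaApply_dst_moved (hM : LeftMove I π π' α β) {v : Letter d → ℝ} (hv : Sym I v) :
    omegaApply I π' v β
      = omegaApply I π (addToClass I β α v) β + omegaApply I π (addToClass I β α v) α := by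
  have hαβ : α ≠ β := by
    rintro rfl
    have h := congrArg Fin.val (hM.first.symm.trans hM.last)
    simp only [Fin.val_zero, Fin.val_last] at h
    exact absurd h (Fin.pos α).ne
  have hiβ : some (I.i β) ≠ some β := (Option.some_injective _).ne (I.nofix β)
  have hiα : some (I.i α) ≠ some β := (Option.some_injective _).ne hM.ne_inv.symm
  rw [omegaApply_eq hv, hM.prefixSum_dst_moved, hM.prefixSum_dst v hiβ,
    omegaApply_eq (hv.addToClass β α), omegaApply_eq (hv.addToClass β α), prefixSum_addToClass,
    prefixSum_addToClass, prefixSum_addToClass, prefixSum_addToClass, sum_addToClass,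
    prefixSum_last π v hM.last, prefixSum_first π v hM.first]
  have hiβα : I.i β ≠ α := fun e => hM.ne_inv (I.i_eq_iff.1 e)
  have hnot : ¬ π (some (I.i α)) < π (some α) := not_lt.2 (hM.first ▸ Fin.zero_le _)
  simp only [hv α, mem_univ, ↓reduceIte, addToClass, hαβ.symm, hM.ne_inv, or_self, add_zero,
    lt_apply_iff_of_eq_zero hM.first, ne_eq, Option.some.injEq, not_false_eq_true,
    apply_lt_of_eq_last hM.last hiα,
    sub_add_add_cancel, hiβα, true_or, lt_self_iff_false, hnot, I.nofix, zero_add,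
    not_true_eq_false]
  ring

theorem omegaApply_dst (hM : LeftMove I π π' α β) {v : Letter d → ℝ} (hv : Sym I v) :
    omegaApply I π' v = addToClass I α β (omegaApply I π (addToClass I β α v)) := by
  have hsymm := ((hv.addToClass β α).omegaApply π).addToClass α β
  have hmoved : omegaApply I π' v β
      = addToClass I α β (omegaApply I π (addToClass I β α v)) β := by
    rw [addToClass, if_pos (Or.inl rfl)]
    exact hM.omegaApply_dst_moved hv
  funext c
  by_cases hc : c = β ∨ c = I.i β
  · rcases hc with rfl | rfl
    · exact hmoved
    · rw [hv.omegaApply π' β, hsymm β, hmoved]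
  · rw [addToClass, if_neg hc, add_zero]
    exact hM.omegaApply_dst_of_ne hv (fun h => hc (Or.inl h)) fun h => hc (Or.inr (I.i_eq_iff.1 h))

end LeftMove

structure RightMove (I : Inv d) (π π' : RPerm d) (α β : Letter d) : Prop where
  first : π (some α) = 0
  last : π (some β) = Fin.last (2*d)
  ne_inv : α ≠ I.i β
  eq_of_ge : ∀ x, π (some (I.i β)) ≤ π x → π' x = π x
  val_moved : (π' (some α) : ℕ) + 1 = π (some (I.i β))
  val_of_lt : ∀ x, x ≠ some α → π x < π (some (I.i β)) → (π' x : ℕ) + 1 = π x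

namespace RightMove

variable {I : Inv d} {π π' : RPerm d} {α β : Letter d}

theorem rev (hM : RightMove I π π' α β) : LeftMove I π.rev π'.rev β α where
  first := by rw [RPerm.rev_apply, hM.last, Fin.rev_last]
  last := by rw [RPerm.rev_apply, hM.first, Fin.rev_zero]
  ne_inv := hM.ne_inv
  eq_of_le x hx := by
    rw [RPerm.rev_apply, RPerm.rev_apply, Fin.rev_le_rev] at hx
    rw [RPerm.rev_apply, RPerm.rev_apply, hM.eq_of_ge x hx]
  val_moved := by
    have := hM.val_moved
    have := (π (some (I.i β))).isLt
    simp only [RPerm.rev_apply, Fin.val_rev]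
    omega
  val_of_gt x hx h := by
    rw [RPerm.rev_apply, RPerm.rev_apply, Fin.rev_lt_rev] at h
    have := hM.val_of_lt x hx h
    have := (π x).isLt
    simp only [RPerm.rev_apply, Fin.val_rev]
    omega

theorem omegaApply_dst (hM : RightMove I π π' α β) {v : Letter d → ℝ} (hv : Sym I v) :
    omegaApply I π' v = addToClass I β α (omegaApply I π (addToClass I α β v)) := by
  have h := hM.rev.omegaApply_dst hv
  rw [omegaApply_rev hv, omegaApply_rev (hv.addToClass α β), addToClass_neg] at h
  exact neg_injective h

end RightMove

theorem translation_vector_transforms_general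
    {d : ℕ} (I : Inv d) (a : Arrow d I) (lam' : Letter d → ℝ)
    (hsym : Sym I lam') :
    omegaApply I a.dst lam'
      = arrowB I a (omegaApply I a.src (arrowBt I a lam')) := by
  rw [arrowB_eq_addToClass, arrowBt_eq_addToClass]
  rcases a.ok with ⟨⟨-, -, α, β, h0, hlast, hne, hle, hmid, hgt⟩, hw, hl⟩
    | ⟨⟨-, -, α, β, h0, hlast, hne, hle, hmid, hgt⟩, hl, hw⟩
  · have hM : LeftMove I a.src a.dst α β := ⟨h0, hlast, hne, hle, hmid, hgt⟩
    obtain rfl : α = a.winner := by simpa using a.src.injective (h0.trans hw.symm)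
    obtain rfl : β = a.loser := by simpa using a.src.injective (hlast.trans hl.symm)
    exact hM.omegaApply_dst hsym
  · have hM : RightMove I a.src a.dst α β := ⟨h0, hlast, hne, hle, hmid, hgt⟩
    obtain rfl : α = a.loser := by simpa using a.src.injective (h0.trans hl.symm)
    obtain rfl : β = a.winner := by simpa using a.src.injective (hlast.trans hw.symm)
    exact hM.omegaApply_dst hsym

/-- If `γ` is an arrow taking `(λ, π)` to `(λ', π')` under the Rauzy induction with
involution (so that `λ = B*_γ·λ'`), then the translation vectors `w = Ω(π)·λ` and
`w' = Ω(π')·λ'` satisfy `w' = B_γ·w`. -/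
theorem translation_vector_transforms
    {d : ℕ} (I : Inv d) (a : Arrow d I) (lam' : Letter d → ℝ)
    (hsym : Sym I lam') (hpos : Positive lam') (hbal : Balanced a.dst lam') :
    omegaApply I a.dst lam'
      = arrowB I a (omegaApply I a.src (arrowBt I a lam')) :=
  translation_vector_transforms_general I a lam' hsym

end Rauzy
end
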